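/- arXiv:2512.10499 — 5 statements merged into one kernel-verified Lean document; each statement's English description precedes it below -/
import Mathlib

section
/- Let W be any finite set of Wang cubes containing the zero cube and let X ⊆ W^{ℤ³} be the subshift of valid tilings, with the zero cube as zero symbol. If X contains at least two configurations, then α(X) ≥ 2 and overline-β(X) ≥ 2. -/
/-- The group `ℤ³`. -/
abbrev V3 : Type := ℤ × ℤ × ℤ

/-- The product topology on configurations `ι → A`, where the alphabet `A`
carries the discrete topology. -/
def prodTop (ι A : Type) : TopologicalSpace (ι → A) :=
  @Pi.topologicalSpace ι (fun _ => A) (fun _ => ⊥)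

/-- The shift action: `(σ_v x)_u = x_{u - v}`. -/
def shift {ι A : Type} [Sub ι] (v : ι) (x : ι → A) : ι → A := fun u => x (u - v)

/-- A subshift: a closed, shift-invariant set of configurations. -/
def IsSubshift {ι A : Type} [Sub ι] (X : Set (ι → A)) : Prop :=
  @IsClosed _ (prodTop ι A) X ∧ ∀ (v : ι), ∀ x ∈ X, shift v x ∈ X

/-- A subshift of finite type: defined by a finite set `F` of forbidden patterns
on a finite domain `D`. -/
def IsSFT {ι A : Type} [Add ι] (X : Set (ι → A)) : Prop :=
  ∃ (D : Finset ι) (F : Set (↥D → A)),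
    X = {x : ι → A | ∀ v : ι, (fun u : ↥D => x (v + (u : ι))) ∉ F}

/-- The subspace topology on a set of configurations. -/
def subTop {ι A : Type} (X : Set (ι → A)) : TopologicalSpace ↥X :=
  TopologicalSpace.induced Subtype.val (prodTop ι A)

/-- The ℤ-trace (projective ℤ-subdynamics) of a three-dimensional subshift. -/
def trace {A : Type} (X : Set (V3 → A)) : Set (ℤ → A) :=
  {y : ℤ → A | ∃ x ∈ X, ∀ n : ℤ, y n = x (0, 0, n)}

/-- `spa z Y`: the least `k` such that `Y` is `k`-sparse (`⊤` if there is none). -/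
noncomputable def spa {A : Type} (z : A) (Y : Set (ℤ → A)) : ℕ∞ :=
  sInf {k : ℕ∞ | ∀ y ∈ Y, {n : ℤ | y n ≠ z}.encard ≤ k}

/-- `ES z Y`: essential sparseness, the least `k` such that for some radius `r`,
the support of every `y ∈ Y` is covered by `k` intervals of radius `r`
(`⊤` if there is none). -/
noncomputable def ES {A : Type} (z : A) (Y : Set (ℤ → A)) : ℕ∞ :=
  sInf {k : ℕ∞ | ∃ r : ℕ, ∀ y ∈ Y, ∃ N : Set ℤ,
    N.encard ≤ k ∧ ∀ n : ℤ, y n ≠ z → ∃ m ∈ N, |n - m| ≤ (r : ℤ)}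

/-- Vertical determinism: two configurations agreeing on the lower half-space
`{(i,j,k) : k < 0}` are equal. -/
def VertDet {A : Type} (X : Set (V3 → A)) : Prop :=
  ∀ x ∈ X, ∀ y ∈ X, (∀ v : V3, v.2.2 < 0 → x v = y v) → x = y

/-- A 0-to-0 conjugacy between pointed three-dimensional subshifts:
a shift-equivariant homeomorphism sending the all-zero configuration to
the all-zero configuration (both subshifts contain their all-zero configurations). -/
def ZeroConj {A B : Type} (zA : A) (zB : B)
    (X : Set (V3 → A)) (X' : Set (V3 → B)) : Prop :=
  ((fun _ => zA) ∈ X) ∧ ((fun _ => zB) ∈ X') ∧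
  ∃ φ : @Homeomorph ↥X ↥X' (subTop X) (subTop X'),
    (∀ (v : V3) (x : ↥X) (h : shift v x.1 ∈ X),
      (φ ⟨shift v x.1, h⟩).1 = shift v (φ x).1) ∧
    (∀ x : ↥X, x.1 = (fun _ => zA) → (φ x).1 = (fun _ => zB))

/-- `α(X) = spa(T(X))`. -/
noncomputable def alphaInv {A : Type} (z : A) (X : Set (V3 → A)) : ℕ∞ :=
  spa z (trace X)

/-- `β(X) = ES(T(X))`. -/
noncomputable def betaInv {A : Type} (z : A) (X : Set (V3 → A)) : ℕ∞ :=
  ES z (trace X)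

/-- `underline-α(X)`: the infimum of `α(X')` over all subshifts `X'`
0-to-0 conjugate to `X`. -/
noncomputable def ulAlpha {A : Type} (zA : A) (X : Set (V3 → A)) : ℕ∞ :=
  sInf {k : ℕ∞ | ∃ (B : Type) (_ : Fintype B) (zB : B) (X' : Set (V3 → B)),
    IsSubshift X' ∧ ZeroConj zA zB X X' ∧ alphaInv zB X' = k}

/-- `underline-β(X)`: the infimum of `β(X')` over all subshifts `X'`
0-to-0 conjugate to `X`. -/
noncomputable def ulBeta {A : Type} (zA : A) (X : Set (V3 → A)) : ℕ∞ :=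
  sInf {k : ℕ∞ | ∃ (B : Type) (_ : Fintype B) (zB : B) (X' : Set (V3 → B)),
    IsSubshift X' ∧ ZeroConj zA zB X X' ∧ betaInv zB X' = k}

/-- `overline-β(X)`: the supremum of `β(X')` over all subshifts `X'`
0-to-0 conjugate to `X`. -/
noncomputable def olBeta {A : Type} (zA : A) (X : Set (V3 → A)) : ℕ∞ :=
  sSup {k : ℕ∞ | ∃ (B : Type) (_ : Fintype B) (zB : B) (X' : Set (V3 → B)),
    IsSubshift X' ∧ ZeroConj zA zB X X' ∧ betaInv zB X' = k}

/-- Directions of the faces of a Wang cube: `(i, true)` is `+eᵢ`, `(i, false)` is `-eᵢ`. -/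
abbrev Dir : Type := Fin 3 × Bool

/-- The standard basis vectors of `ℤ³`. -/
def unitV : Fin 3 → V3 := ![(1, 0, 0), (0, 1, 0), (0, 0, 1)]

/-- The vector of a direction. -/
def dirVec (s : Dir) : V3 := if s.2 then unitV s.1 else -unitV s.1

/-- The opposite direction. -/
def opp (s : Dir) : Dir := (s.1, !s.2)

/-- The zero cube: all six faces have the zero color. -/
def zeroCube {C : Type} (z : C) : Dir → C := fun _ => z

/-- The set of valid tilings by a finite set `W` of Wang cubes: colors of
matching faces of adjacent cubes agree. -/
def WangTilings {C : Type} (W : Finset (Dir → C)) :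
    Set (V3 → {w : Dir → C // w ∈ W}) :=
  {x | ∀ (v : V3) (s : Dir), (x v).1 s = (x (v + dirVec s)).1 (opp s)}

/-- ℓ∞ distance on `ℤ³`. -/
def dinf (u w : V3) : ℤ :=
  max |u.1 - w.1| (max |u.2.1 - w.2.1| |u.2.2 - w.2.2|)

/-- Reachability in the graph on the support of `x` with edges between
cells at ℓ∞-distance at most `r`. -/
def Reach {A : Type} (z : A) (r : ℕ) (x : V3 → A) : V3 → V3 → Prop :=
  Relation.ReflTransGen (fun u w => x u ≠ z ∧ x w ≠ z ∧ dinf u w ≤ (r : ℤ))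

/-- `y` is an `r`-connected component configuration of `x`: it agrees with `x`
on one `r`-connected component of the support of `x` and is zero elsewhere. -/
def IsCompConf {A : Type} (z : A) (r : ℕ) (x y : V3 → A) : Prop :=
  ∃ v₀ : V3, x v₀ ≠ z ∧
    (∀ u : V3, (x u ≠ z ∧ Reach z r x v₀ u) → y u = x u) ∧
    (∀ u : V3, ¬(x u ≠ z ∧ Reach z r x v₀ u) → y u = z)

/-- A set of configurations is `r`-zero-gluing if membership is equivalent to
membership of all `r`-connected component configurations. -/
def IsZeroGluing {A : Type} (z : A) (r : ℕ) (X : Set (V3 → A)) : Prop :=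
  ∀ x : V3 → A, x ∈ X ↔ ∀ y : V3 → A, IsCompConf z r x y → y ∈ X

/-- The `r`-zero-gluing closure of `X`: the intersection of all `r`-zero-gluing
subshifts containing `X`. -/
def ZGC {A : Type} (z : A) (r : ℕ) (X : Set (V3 → A)) : Set (V3 → A) :=
  ⋂₀ {Y : Set (V3 → A) | IsSubshift Y ∧ IsZeroGluing z r Y ∧ X ⊆ Y}

/-!
The zero cube has all faces colored `0`, so two valid tilings with disjoint supports can be
superposed into a valid tiling. Take a tiling with a nonzero cube. For a given displacement `d`,
either it already has two nonzero cubes `d` apart, or its support is disjoint from its translate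
by `d`, and superposing the two gives such a pair. With `d = (0, 0, m)` the trace contains points
with two nonzero symbols at distance `m` for every `m`: it is neither `1`-sparse nor covered by a
single interval of any fixed radius. Finally `X` is `0`-to-`0` conjugate to itself, so
`β(X) ≤ overline-β(X)`.
-/

section OneDimensional

variable {A : Type} {z : A} {Y : Set (ℤ → A)}

lemma two_le_spa_of_ne_zero_pair {y : ℤ → A} (hy : y ∈ Y) {a b : ℤ} (hab : a ≠ b)
    (ha : y a ≠ z) (hb : y b ≠ z) : 2 ≤ spa z Y := by
  refine le_sInf fun k hk => ?_
  calc (2 : ℕ∞) = ({a, b} : Set ℤ).encard := (Set.encard_pair hab).symm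
    _ ≤ {n : ℤ | y n ≠ z}.encard := Set.encard_le_encard (Set.pair_subset ha hb)
    _ ≤ k := hk y hy

lemma two_le_ES_of_ne_zero_pairs (h : ∀ m : ℤ, ∃ y ∈ Y, y 0 ≠ z ∧ y m ≠ z) : 2 ≤ ES z Y := by
  refine le_sInf fun k ⟨r, hr⟩ => ?_
  by_contra! hk
  obtain ⟨y, hy, h0, hm⟩ := h (2 * r + 1)
  obtain ⟨N, hN, hcover⟩ := hr y hy
  obtain ⟨c₀, hc₀, hd₀⟩ := hcover 0 h0
  obtain ⟨c₁, hc₁, hd₁⟩ := hcover (2 * r + 1) hm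
  have hN₁ : N.encard ≤ 1 := hN.trans (Order.le_of_lt_succ hk)
  obtain rfl : c₀ = c₁ := Set.encard_le_one_iff.1 hN₁ _ _ hc₀ hc₁
  rw [abs_le] at hd₀ hd₁
  omega

end OneDimensional

lemma mem_trace_of_shift_mem {A : Type} {X : Set (V3 → A)}
    (hX : ∀ v : V3, ∀ x ∈ X, shift v x ∈ X) {x : V3 → A} (hx : x ∈ X) (v : V3) :
    (fun n : ℤ => x (v + (0, 0, n))) ∈ trace X :=
  ⟨shift (-v) x, hX (-v) x hx, fun n => by simp only [shift, sub_neg_eq_add, add_comm]⟩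

lemma betaInv_le_olBeta {A : Type} [Fintype A] {z : A} {X : Set (V3 → A)}
    (hX : IsSubshift X) (hz : (fun _ => z) ∈ X) : betaInv z X ≤ olBeta z X := by
  let := subTop X
  exact le_sSup ⟨A, inferInstance, z, X, hX,
    ⟨hz, hz, Homeomorph.refl _, fun _ _ _ => rfl, fun _ hx => hx⟩, rfl⟩

namespace WangTilings

variable {C : Type} {W : Finset (Dir → C)}

lemma shift_mem {x : V3 → {w : Dir → C // w ∈ W}} (hx : x ∈ WangTilings W) (v : V3) :
    shift v x ∈ WangTilings W := by
  intro u s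
  change (x (u - v)).1 s = (x (u + dirVec s - v)).1 (opp s)
  rw [add_sub_right_comm]
  exact hx (u - v) s

lemma isClosed : @IsClosed _ (prodTop V3 {w : Dir → C // w ∈ W}) (WangTilings W) := by
  let : TopologicalSpace {w : Dir → C // w ∈ W} := ⊥
  have : DiscreteTopology {w : Dir → C // w ∈ W} := ⟨rfl⟩
  let : TopologicalSpace (V3 → {w : Dir → C // w ∈ W}) := prodTop V3 _
  have hWang : WangTilings W = ⋂ p : V3 × Dir,
      (fun x : V3 → {w : Dir → C // w ∈ W} => (x p.1, x (p.1 + dirVec p.2))) ⁻¹'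
        {q | q.1.1 p.2 = q.2.1 (opp p.2)} := by
    ext x
    simp only [Set.mem_iInter, Set.mem_preimage, Set.mem_ofPred_eq]
    exact ⟨fun h p => h p.1 p.2, fun h v s => h (v, s)⟩
  rw [hWang]
  exact isClosed_iInter fun p =>
    (isClosed_discrete _).preimage ((continuous_apply _).prodMk (continuous_apply _))

lemma isSubshift : IsSubshift (WangTilings W) :=
  ⟨isClosed, fun v _ hx => shift_mem hx v⟩

variable (zC : C) (hz : zeroCube zC ∈ W)

lemma const_zero_mem :
    (fun _ : V3 => (⟨zeroCube zC, hz⟩ : {w : Dir → C // w ∈ W})) ∈ WangTilings W :=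
  fun _ _ => rfl

open scoped Classical in
lemma superpose_mem {x y : V3 → {w : Dir → C // w ∈ W}}
    (hx : x ∈ WangTilings W) (hy : y ∈ WangTilings W)
    (hdisj : ∀ u, x u = ⟨zeroCube zC, hz⟩ ∨ y u = ⟨zeroCube zC, hz⟩) :
    (fun u => if x u = ⟨zeroCube zC, hz⟩ then y u else x u) ∈ WangTilings W := by
  intro u s
  have hxy : ∀ w, x w ≠ ⟨zeroCube zC, hz⟩ → y w = ⟨zeroCube zC, hz⟩ :=
    fun w hw => (hdisj w).resolve_left hw
  have hxu := hx u s
  have hyu := hy u s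
  -- At a boundary between the two supports both adjacent faces carry the zero color.
  by_cases hu : x u = ⟨zeroCube zC, hz⟩ <;> by_cases hus : x (u + dirVec s) = ⟨zeroCube zC, hz⟩
  · simpa only [hu, hus, if_true] using hyu
  · simp only [hu, hus, if_true, if_false] at hxu hyu ⊢
    rw [hyu, hxy _ hus, ← hxu]
    rfl
  · simp only [hu, hus, if_true, if_false] at hxu hyu ⊢
    rw [hxu, ← hyu, hxy _ hu]
    rfl
  · simpa only [hu, hus, if_false] using hxu

lemma exists_ne_zero_pair (hX : (WangTilings W).Nontrivial) (d : V3) :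
    ∃ x ∈ WangTilings W, ∃ v : V3,
      x v ≠ ⟨zeroCube zC, hz⟩ ∧ x (v + d) ≠ ⟨zeroCube zC, hz⟩ := by
  classical
  obtain ⟨x, hx, hx0⟩ := hX.exists_ne fun _ => ⟨zeroCube zC, hz⟩
  obtain ⟨v, hv⟩ := Function.ne_iff.1 hx0
  by_cases hpair : ∃ u, x u ≠ ⟨zeroCube zC, hz⟩ ∧ x (u + d) ≠ ⟨zeroCube zC, hz⟩
  · exact ⟨x, hx, hpair⟩
  push Not at hpair
  have hdisj : ∀ u, x u = ⟨zeroCube zC, hz⟩ ∨ shift d x u = ⟨zeroCube zC, hz⟩ := fun u =>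
    or_iff_not_imp_right.2 fun hu => by simpa only [sub_add_cancel] using hpair (u - d) hu
  have hvd : x (v + d) = ⟨zeroCube zC, hz⟩ := hpair v hv
  refine ⟨_, superpose_mem zC hz hx (shift_mem hx d) hdisj, v, ?_, ?_⟩
  · simpa only [if_neg hv] using hv
  · simpa only [if_pos hvd, shift, add_sub_cancel_right] using hv

end WangTilings

theorem statement10_general {C : Type} (zC : C) (W : Finset (Dir → C))
    (hz : zeroCube zC ∈ W)
    (hX : Set.Nontrivial (WangTilings W)) :
    2 ≤ alphaInv (⟨zeroCube zC, hz⟩ : {w : Dir → C // w ∈ W}) (WangTilings W) ∧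
    2 ≤ olBeta (⟨zeroCube zC, hz⟩ : {w : Dir → C // w ∈ W}) (WangTilings W) := by
  have hpairs : ∀ m : ℤ, ∃ y ∈ trace (WangTilings W),
      y 0 ≠ ⟨zeroCube zC, hz⟩ ∧ y m ≠ ⟨zeroCube zC, hz⟩ := fun m => by
    obtain ⟨x, hx, v, hv, hvm⟩ := WangTilings.exists_ne_zero_pair zC hz hX (0, 0, m)
    refine ⟨_, mem_trace_of_shift_mem WangTilings.isSubshift.2 hx v, ?_, hvm⟩
    simpa only [Prod.mk_zero_zero, add_zero] using hv
  obtain ⟨y, hy, h0, h1⟩ := hpairs 1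
  exact ⟨two_le_spa_of_ne_zero_pair hy zero_ne_one h0 h1,
    (two_le_ES_of_ne_zero_pairs hpairs).trans
      (betaInv_le_olBeta WangTilings.isSubshift (WangTilings.const_zero_mem zC hz))⟩

/-- For any finite set of Wang cubes containing the zero cube whose tiling SFT
`X` contains at least two configurations, `α(X) ≥ 2` and `overline-β(X) ≥ 2`. -/
theorem statement10 {C : Type} [Fintype C] (zC : C) (W : Finset (Dir → C))
    (hz : zeroCube zC ∈ W)
    (hX : Set.Nontrivial (WangTilings W)) :
    2 ≤ alphaInv (⟨zeroCube zC, hz⟩ : {w : Dir → C // w ∈ W}) (WangTilings W) ∧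
    2 ≤ olBeta (⟨zeroCube zC, hz⟩ : {w : Dir → C // w ∈ W}) (WangTilings W) :=
  statement10_general zC W hz hX
end

section
/- Let M and N be mats in ℝ³ whose underlying sets are disjoint, and suppose π_H(M) is a translate of π_H(N), i.e. π_H(M) = w + π_H(N) for some w ∈ ℝ². Suppose (x₁,y₁,z₁), (x₂,y₂,z₂) ∈ M and (x₁,y₁,z₁'), (x₂,y₂,z₂') ∈ N. If z₁ < z₁', then z₂ < z₂'. -/
open Set
open scoped ENNReal Classical

/-- The horizontal projection `π_H : ℝ³ → ℝ²` to the first two coordinates. -/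
def piH (p : ℝ × ℝ × ℝ) : ℝ × ℝ := (p.1, p.2.1)

/-- `S` is an `s`-string over `[c,d]` with endpoint values `x₀, y₀`:
the graph `{(s, z, f z) : z ∈ [c,d]}` of a continuous function `f` with
`f c = x₀` and `f d = y₀`. -/
def IsString (s c d x0 y0 : ℝ) (S : Set (ℝ × ℝ × ℝ)) : Prop :=
  ∃ f : ℝ → ℝ, ContinuousOn f (Icc c d) ∧ f c = x0 ∧ f d = y0 ∧
    S = {p : ℝ × ℝ × ℝ | ∃ z ∈ Icc c d, p = (s, z, f z)}

/-- The data of a mat: the rectangle `[a,b] × [c,d]`, the endpoint values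
`x₀, y₀`, and for each `s` a family of `s`-strings (given as a set of sets). -/
structure MatData where
  a : ℝ
  b : ℝ
  c : ℝ
  d : ℝ
  x0 : ℝ
  y0 : ℝ
  strings : ℝ → Set (Set (ℝ × ℝ × ℝ))

/-- The `s`-section of a mat: the closure of the union of its `s`-strings. -/
def MatData.sect (M : MatData) (s : ℝ) : Set (ℝ × ℝ × ℝ) :=
  closure (⋃ S ∈ M.strings s, S)

/-- The underlying set of a mat: the union of its sections. -/
def MatData.carrier (M : MatData) : Set (ℝ × ℝ × ℝ) :=
  ⋃ s ∈ Icc M.a M.b, M.sect s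

/-- The mat axioms. -/
def IsMat (M : MatData) : Prop :=
  M.a ≤ M.b ∧ M.c ≤ M.d ∧
  IsCompact M.carrier ∧
  piH '' M.carrier = Icc M.a M.b ×ˢ Icc M.c M.d ∧
  (∀ s ∈ Icc M.a M.b, (M.strings s).Nonempty) ∧
  (∀ s ∈ Icc M.a M.b, ∀ S ∈ M.strings s, IsString s M.c M.d M.x0 M.y0 S) ∧
  (∀ s ∈ Icc M.a M.b, IsCompact (M.sect s)) ∧
  (∀ s ∈ Icc M.a M.b,
    M.sect s ⊆ {p : ℝ × ℝ × ℝ | p.1 = s ∧ p.2.1 ∈ Icc M.c M.d})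

/-- The distance between two strings: the supremum, over pairs of points with
the same second coordinate, of the distance of their third coordinates.  For
strings over the same interval this is `sup_z |f_S(z) − f_{S'}(z)|`. -/
noncomputable def sDist (S S' : Set (ℝ × ℝ × ℝ)) : ℝ≥0∞ :=
  ⨆ p ∈ S, ⨆ q ∈ S', ⨆ _ : p.2.1 = q.2.1, edist p.2.2 q.2.2

/-- The mat-distance: `∞` if the horizontal projections differ, and otherwise
the supremum over `s` of the Hausdorff-style distance between the families of
`s`-strings. -/
noncomputable def matDist (M M' : MatData) : ℝ≥0∞ :=
  if Icc M.a M.b ×ˢ Icc M.c M.d = Icc M'.a M'.b ×ˢ Icc M'.c M'.d then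
    ⨆ s ∈ Icc M.a M.b,
      max (⨆ S ∈ M.strings s, ⨅ S' ∈ M'.strings s, sDist S S')
          (⨆ S' ∈ M'.strings s, ⨅ S ∈ M.strings s, sDist S S')
  else ⊤

/-- The graph string of `f` over `[0, e]` at first coordinate `s`. -/
def strGraph (s e : ℝ) (f : ℝ → ℝ) : Set (ℝ × ℝ × ℝ) :=
  {p : ℝ × ℝ × ℝ | ∃ z ∈ Icc 0 e, p = (s, z, f z)}

/-- The height function of the up bridges of `T`. -/
noncomputable def fUp (a b c d : ℝ) (z : ℝ) : ℝ :=
  max 0 (min (b + c) (min (z - a) (a + 2 * (b + c) + d - z)))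

/-- The height function of the central down bridge of `T`. -/
noncomputable def fDown (a b c d : ℝ) (z : ℝ) : ℝ :=
  min 0 (max (-b) (max (a - z) (z - (a + 2 * (b + c) + d))))

/-- The strings of the mat `T`: the flat strings for `s ∈ [0,1] ∪ [4,5]`, the
up-bridge strings for `s ∈ [1,2] ∪ [3,4]`, and the down-bridge strings for
`s ∈ [2,3]`. -/
def Tstrings (a b c d : ℝ) (s : ℝ) : Set (Set (ℝ × ℝ × ℝ)) :=
  {S | (s ∈ Icc (0 : ℝ) 1 ∪ Icc (4 : ℝ) 5 ∧
          S = strGraph s (2 * (a + b + c) + d) (fun _ => 0)) ∨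
       (s ∈ Icc (1 : ℝ) 2 ∪ Icc (3 : ℝ) 4 ∧
          S = strGraph s (2 * (a + b + c) + d) (fUp a b c d)) ∨
       (s ∈ Icc (2 : ℝ) 3 ∧
          S = strGraph s (2 * (a + b + c) + d) (fDown a b c d))}

/-- The mat `T`, with horizontal projection `[0,5] × [0,e]`. -/
def TMat (a b c d : ℝ) : MatData where
  a := 0
  b := 5
  c := 0
  d := 2 * (a + b + c) + d
  x0 := 0
  y0 := 0
  strings := Tstrings a b c d

/-- The strings of `T³`: concatenations of three strings of `T`, translated by
`(0,−e,0)`, `(0,0,0)` and `(0,e,0)` respectively. -/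
def T3strings (a b c d : ℝ) (s : ℝ) : Set (Set (ℝ × ℝ × ℝ)) :=
  {S | ∃ S1 ∈ Tstrings a b c d s, ∃ S2 ∈ Tstrings a b c d s,
       ∃ S3 ∈ Tstrings a b c d s,
    S = (fun p : ℝ × ℝ × ℝ => (p.1, p.2.1 - (2 * (a + b + c) + d), p.2.2)) '' S1 ∪
        S2 ∪
        (fun p : ℝ × ℝ × ℝ => (p.1, p.2.1 + (2 * (a + b + c) + d), p.2.2)) '' S3}

/-- The mat `T³`, with horizontal projection `[0,5] × [−e,2e]`. -/
def T3Mat (a b c d : ℝ) : MatData where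
  a := 0
  b := 5
  c := -(2 * (a + b + c) + d)
  d := 2 * (2 * (a + b + c) + d)
  x0 := 0
  y0 := 0
  strings := T3strings a b c d

section Statement11Aux

/-- Every point of a string of `M` at `s ∈ [a,b]` lies in the carrier. -/
lemma mem_carrier_of_string (M : MatData) {s : ℝ} (hs : s ∈ Icc M.a M.b)
    {S : Set (ℝ × ℝ × ℝ)} (hS : S ∈ M.strings s) {p : ℝ × ℝ × ℝ} (hp : p ∈ S) :
    p ∈ M.carrier := by
  have h1 : p ∈ M.sect s := subset_closure (mem_biUnion hS hp)
  exact mem_biUnion hs h1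

lemma sect_subset_carrier (M : MatData) {s : ℝ} (hs : s ∈ Icc M.a M.b) :
    M.sect s ⊆ M.carrier := fun p hp => mem_biUnion hs hp

lemma carrier_spec (M : MatData) (hM : IsMat M) {x y z : ℝ}
    (h : (x, y, z) ∈ M.carrier) :
    x ∈ Icc M.a M.b ∧ y ∈ Icc M.c M.d ∧ (x, y, z) ∈ M.sect x := by
  obtain ⟨-, -, -, -, -, -, -, hsub⟩ := hM
  rw [MatData.carrier, mem_iUnion₂] at h
  obtain ⟨s, hs, hp⟩ := h
  obtain ⟨h1, h2⟩ := hsub s hs hp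
  simp only at h1 h2
  subst h1
  exact ⟨hs, h2, hp⟩

lemma exists_fiber (M : MatData) (hM : IsMat M) {x y : ℝ}
    (hx : x ∈ Icc M.a M.b) (hy : y ∈ Icc M.c M.d) :
    ∃ z, (x, y, z) ∈ M.carrier := by
  obtain ⟨-, -, -, hproj, -, -, -, -⟩ := hM
  have : (x, y) ∈ piH '' M.carrier := by
    rw [hproj]; exact ⟨hx, hy⟩
  obtain ⟨p, hp, he⟩ := this
  refine ⟨p.2.2, ?_⟩
  have h1 : p.1 = x := congrArg Prod.fst he
  have h2 : p.2.1 = y := congrArg Prod.snd he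
  have : p = (x, y, p.2.2) := by
    ext <;> simp [h1, h2]
  rwa [this] at hp

/-- Extract the function of a string and the basic facts about it. -/
lemma string_fn (M : MatData) (hM : IsMat M) {s : ℝ} (hs : s ∈ Icc M.a M.b)
    {S : Set (ℝ × ℝ × ℝ)} (hS : S ∈ M.strings s) :
    ∃ f : ℝ → ℝ, ContinuousOn f (Icc M.c M.d) ∧ f M.c = M.x0 ∧ f M.d = M.y0 ∧
      (∀ t ∈ Icc M.c M.d, (s, t, f t) ∈ S) ∧
      (∀ p ∈ S, ∃ t ∈ Icc M.c M.d, p = (s, t, f t)) := by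
  obtain ⟨-, -, -, -, -, hstr, -, -⟩ := hM
  obtain ⟨f, hfc, h0, h1, hSeq⟩ := hstr s hs S hS
  refine ⟨f, hfc, h0, h1, fun t ht => ?_, fun p hp => ?_⟩
  · rw [hSeq]; exact ⟨t, ht, rfl⟩
  · rw [hSeq] at hp; exact hp

end Statement11Aux

/-- String-level order: at common parameters, points of `M`-strings at `s` lie
strictly below points of `N`-strings at `s`. -/
def SBelow (M N : MatData) (s : ℝ) : Prop :=
  ∀ S ∈ M.strings s, ∀ S' ∈ N.strings s, ∀ p ∈ S, ∀ q ∈ S',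
    p.2.1 = q.2.1 → p.2.2 < q.2.2

section Rigidity

variable {M N : MatData}

lemma not_mem_both (hdisj : Disjoint M.carrier N.carrier) {p : ℝ × ℝ × ℝ}
    (h1 : p ∈ M.carrier) (h2 : p ∈ N.carrier) : False :=
  Set.disjoint_left.mp hdisj h1 h2

/-- Rigidity: for a fixed pair of (pseudo-)strings, the sign of `f - g` is
constant on the common part of the domains. -/
lemma rigidity (hdisj : Disjoint M.carrier N.carrier) {s : ℝ} {f g : ℝ → ℝ}
    (hfc : ContinuousOn f (Icc M.c M.d)) (hgc : ContinuousOn g (Icc N.c N.d))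
    (hfm : ∀ t ∈ Icc M.c M.d, (s, t, f t) ∈ M.carrier)
    (hgm : ∀ t ∈ Icc N.c N.d, (s, t, g t) ∈ N.carrier)
    {t t' : ℝ} (htM : t ∈ Icc M.c M.d) (htN : t ∈ Icc N.c N.d)
    (htM' : t' ∈ Icc M.c M.d) (htN' : t' ∈ Icc N.c N.d)
    (h : f t < g t) : f t' < g t' := by
  by_contra hcon
  push_neg at hcon
  rcases eq_or_lt_of_le hcon with he | hlt
  · exact not_mem_both hdisj (hfm t' htM') (he ▸ hgm t' htN')
  · have hsubM : uIcc t t' ⊆ Icc M.c M.d := uIcc_subset_Icc htM htM'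
    have hsubN : uIcc t t' ⊆ Icc N.c N.d := uIcc_subset_Icc htN htN'
    have hc : ContinuousOn (fun u => f u - g u) (uIcc t t') :=
      (hfc.mono hsubM).sub (hgc.mono hsubN)
    have h0 : (0 : ℝ) ∈ uIcc (f t - g t) (f t' - g t') := by
      rw [Set.mem_uIcc]
      left; constructor <;> linarith
    obtain ⟨ξ, hξ, he⟩ := intermediate_value_uIcc hc h0
    simp only at he
    have hfg : f ξ = g ξ := by linarith
    exact not_mem_both hdisj (hfm ξ (hsubM hξ)) (hfg ▸ hgm ξ (hsubN hξ))

/-- Per-`s` dichotomy: either all `M`-strings are below all `N`-strings on the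
common domain, or vice versa. -/
lemma dichotomy (hM : IsMat M) (hN : IsMat N)
    (hdisj : Disjoint M.carrier N.carrier) {s : ℝ}
    (hsM : s ∈ Icc M.a M.b) (hsN : s ∈ Icc N.a N.b)
    (hcase : (M.c ≤ N.c ∧ M.d ≤ N.d) ∨ (N.c ≤ M.c ∧ N.d ≤ M.d)) :
    SBelow M N s ∨ SBelow N M s := by
  by_contra hcon
  push_neg at hcon
  obtain ⟨hA, hB⟩ := hcon
  rw [SBelow] at hA hB
  push_neg at hA hB
  obtain ⟨S, hS, S', hS', p, hp, q, hq, hpq, hA⟩ := hA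
  obtain ⟨S₂', hS₂', S₂, hS₂, q₂, hq₂, p₂, hp₂, hpq₂, hB⟩ := hB
  obtain ⟨f, hfc, hfx0, hfy0, hfmem, hfpt⟩ := string_fn M hM hsM hS
  obtain ⟨g, hgc, hgx0, hgy0, hgmem, hgpt⟩ := string_fn N hN hsN hS'
  obtain ⟨f₂, hf₂c, hf₂x0, hf₂y0, hf₂mem, hf₂pt⟩ := string_fn M hM hsM hS₂
  obtain ⟨g₂, hg₂c, hg₂x0, hg₂y0, hg₂mem, hg₂pt⟩ := string_fn N hN hsN hS₂'
  -- carrier membership versions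
  have hfm : ∀ t ∈ Icc M.c M.d, (s, t, f t) ∈ M.carrier :=
    fun t ht => mem_carrier_of_string M hsM hS (hfmem t ht)
  have hgm : ∀ t ∈ Icc N.c N.d, (s, t, g t) ∈ N.carrier :=
    fun t ht => mem_carrier_of_string N hsN hS' (hgmem t ht)
  have hf₂m : ∀ t ∈ Icc M.c M.d, (s, t, f₂ t) ∈ M.carrier :=
    fun t ht => mem_carrier_of_string M hsM hS₂ (hf₂mem t ht)
  have hg₂m : ∀ t ∈ Icc N.c N.d, (s, t, g₂ t) ∈ N.carrier :=
    fun t ht => mem_carrier_of_string N hsN hS₂' (hg₂mem t ht)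
  -- unpack the witness points
  obtain ⟨t, htM, hpt⟩ := hfpt p hp
  obtain ⟨u', htN', hqt⟩ := hgpt q hq
  subst hpt; subst hqt
  simp only at hpq hA
  subst hpq
  -- hA : ¬ f t < g u'... here p.2.1 = q.2.1 means t = u'
  have htN : t ∈ Icc N.c N.d := htN'
  have hfgt : g t < f t := by
    rcases eq_or_lt_of_le hA with h | h
    · exact absurd (h ▸ hgm t htN) (fun hc => not_mem_both hdisj (hfm t htM) hc)
    · exact h
  obtain ⟨u, huN, hq₂t⟩ := hg₂pt q₂ hq₂
  obtain ⟨u₂, huM, hp₂t⟩ := hf₂pt p₂ hp₂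
  subst hq₂t; subst hp₂t
  simp only at hpq₂ hB
  subst hpq₂
  have huM' : u ∈ Icc M.c M.d := huM
  have hfg₂u : f₂ u < g₂ u := by
    rcases eq_or_lt_of_le hB with h | h
    · exact absurd (h ▸ hf₂m u huM') (fun hc => not_mem_both hdisj hc (hg₂m u huN))
    · exact h
  -- now derive the contradiction using the shared endpoint values
  rcases hcase with ⟨hcc, hdd⟩ | ⟨hcc, hdd⟩
  · -- M.c ≤ N.c, M.d ≤ N.d : use N.c (left end of J) and M.d (right end)
    have hNcM : N.c ∈ Icc M.c M.d := ⟨hcc, le_trans htN.1 htM.2⟩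
    have hNcN : N.c ∈ Icc N.c N.d := ⟨le_refl _, hN.2.1⟩
    have hMdM : M.d ∈ Icc M.c M.d := ⟨hM.2.1, le_refl _⟩
    have hMdN : M.d ∈ Icc N.c N.d := ⟨le_trans htN.1 htM.2, hdd⟩
    -- f₂ < g₂ propagates to N.c : f₂ N.c < g₂ N.c = N.x0 = g N.c
    have h1 : f₂ N.c < g₂ N.c :=
      rigidity hdisj hf₂c hg₂c hf₂m hg₂m huM' huN hNcM hNcN hfg₂u
    have h1' : f₂ N.c < g N.c := by rw [hgx0]; rw [hg₂x0] at h1; exact h1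
    -- hence f₂ < g on J, in particular at M.d
    have h2 : f₂ M.d < g M.d :=
      rigidity hdisj hf₂c hgc hf₂m hgm hNcM hNcN hMdM hMdN h1'
    -- but g < f propagates to M.d : g M.d < f M.d = M.y0 = f₂ M.d
    have h3 : g M.d < f M.d := by
      by_contra hc
      push_neg at hc
      rcases eq_or_lt_of_le hc with h | h
      · exact not_mem_both hdisj (hfm M.d hMdM) (by rw [h]; exact hgm M.d hMdN)
      · exact absurd (rigidity hdisj hfc hgc hfm hgm hMdM hMdN htM htN h) (not_lt.mpr (le_of_lt hfgt))
    rw [hfy0, ← hf₂y0] at h3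
    linarith
  · -- N.c ≤ M.c, N.d ≤ M.d : use M.c (left end of J) and N.d (right end)
    have hMcM : M.c ∈ Icc M.c M.d := ⟨le_refl _, hM.2.1⟩
    have hMcN : M.c ∈ Icc N.c N.d := ⟨hcc, le_trans htM.1 htN.2⟩
    have hNdM : N.d ∈ Icc M.c M.d := ⟨le_trans htM.1 htN.2, hdd⟩
    have hNdN : N.d ∈ Icc N.c N.d := ⟨hN.2.1, le_refl _⟩
    -- f₂ < g₂ propagates to N.d : f₂ N.d < g₂ N.d = N.y0 = g N.d
    have h1 : f₂ N.d < g₂ N.d :=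
      rigidity hdisj hf₂c hg₂c hf₂m hg₂m huM' huN hNdM hNdN hfg₂u
    have h1' : f₂ N.d < g N.d := by rw [hgy0]; rw [hg₂y0] at h1; exact h1
    -- hence f₂ < g on J, in particular at M.c
    have h2 : f₂ M.c < g M.c :=
      rigidity hdisj hf₂c hgc hf₂m hgm hNdM hNdN hMcM hMcN h1'
    -- but g < f propagates to M.c : g M.c < f M.c = M.x0 = f₂ M.c
    have h3 : g M.c < f M.c := by
      by_contra hc
      push_neg at hc
      rcases eq_or_lt_of_le hc with h | h
      · exact not_mem_both hdisj (hfm M.c hMcM) (by rw [h]; exact hgm M.c hMcN)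
      · exact absurd (rigidity hdisj hfc hgc hfm hgm hMcM hMcN htM htN h) (not_lt.mpr (le_of_lt hfgt))
    rw [hfx0, ← hf₂x0] at h3
    linarith

end Rigidity

section KeyLemma

variable {M N : MatData}

/-- IVT crossing helper: a continuous function attaining values on both sides
of `v` at two points near `y` attains `v` at a point near `y`. -/
lemma cross_aux {g : ℝ → ℝ} {c d : ℝ} (hgc : ContinuousOn g (Icc c d))
    {w₁ w₂ y v ε : ℝ} (h1 : w₁ ∈ Icc c d) (h2 : w₂ ∈ Icc c d)
    (hv : v ∈ uIcc (g w₁) (g w₂)) (hd1 : |y - w₁| < ε) (hd2 : |y - w₂| < ε) :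
    ∃ ξ ∈ Icc c d, g ξ = v ∧ |y - ξ| < ε := by
  have hsub : uIcc w₁ w₂ ⊆ Icc c d := uIcc_subset_Icc h1 h2
  obtain ⟨ξ, hξ, he⟩ := intermediate_value_uIcc (hgc.mono hsub) hv
  refine ⟨ξ, hsub hξ, he, ?_⟩
  rw [abs_lt] at hd1 hd2 ⊢
  rcases Set.mem_uIcc.mp hξ with ⟨ha, hb⟩ | ⟨ha, hb⟩ <;>
    exact ⟨by linarith, by linarith⟩

lemma dist_aux {s y ξ v : ℝ} {ε : ℝ} (h : |y - ξ| < ε) (hε : 0 < ε) :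
    dist ((s, y, v) : ℝ × ℝ × ℝ) (s, ξ, v) < ε := by
  rw [Prod.dist_eq, Prod.dist_eq]
  simp only [dist_self]
  refine max_lt hε (max_lt ?_ hε)
  rwa [Real.dist_eq]

/-- The key lemma: the string-level order `SBelow` propagates to all carrier
points over the common part of the rectangles. -/
lemma below_carrier (hM : IsMat M) (hN : IsMat N)
    (hdisj : Disjoint M.carrier N.carrier) {s : ℝ}
    (hsM : s ∈ Icc M.a M.b) (hsN : s ∈ Icc N.a N.b)
    (hsb : SBelow M N s) {y zM zN : ℝ}
    (hyM : y ∈ Icc M.c M.d) (hyN : y ∈ Icc N.c N.d)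
    (hzM : (s, y, zM) ∈ M.carrier) (hzN : (s, y, zN) ∈ N.carrier) : zM < zN := by
  have hne : zM ≠ zN := by
    intro he
    exact not_mem_both hdisj hzM (he ▸ hzN)
  rcases lt_or_gt_of_ne hne with h | hgt
  · exact h
  exfalso
  -- the fibers of the two sections over (s, y)
  set A : Set ℝ := {z : ℝ | (s, y, z) ∈ M.sect s} with hA
  set B : Set ℝ := {z : ℝ | (s, y, z) ∈ N.sect s} with hB
  have hcont : Continuous fun z : ℝ => ((s, y, z) : ℝ × ℝ × ℝ) :=
    continuous_const.prodMk (continuous_const.prodMk continuous_id)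
  have hAcl : IsClosed A := by
    rw [hA]
    exact IsClosed.preimage hcont (by rw [MatData.sect]; exact isClosed_closure)
  have hBcl : IsClosed B := by
    rw [hB]
    exact IsClosed.preimage hcont (by rw [MatData.sect]; exact isClosed_closure)
  have hzMA : zM ∈ A := (carrier_spec M hM hzM).2.2
  have hzNB : zN ∈ B := (carrier_spec N hN hzN).2.2
  have hABdisj : ∀ z, z ∈ A → z ∈ B → False := fun z h1 h2 =>
    not_mem_both hdisj (sect_subset_carrier M hsM h1) (sect_subset_carrier N hsN h2)
  -- main claim: the interval [zN, zM] is covered by the two fibers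
  have hcov : Icc zN zM ⊆ A ∪ B := by
    intro v hv
    rcases eq_or_lt_of_le hv.1 with he | hvN
    · exact Or.inr (he ▸ hzNB)
    rcases eq_or_lt_of_le hv.2 with he | hvM
    · exact Or.inl (he ▸ hzMA)
    -- zN < v < zM : approximate by exact string values
    have hUM : (s, y, zM) ∈ closure (⋃ S ∈ M.strings s, S) := hzMA
    have hUN : (s, y, zN) ∈ closure (⋃ S ∈ N.strings s, S) := hzNB
    have hkey : (s, y, v) ∈
        closure ((⋃ S ∈ M.strings s, S) ∪ ⋃ S ∈ N.strings s, S) := by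
      rw [Metric.mem_closure_iff]
      intro ε hε
      -- a nearby M-string point above v
      have hε₁ : (0 : ℝ) < min ε (zM - v) := lt_min hε (by linarith)
      obtain ⟨p₀, hp₀U, hdp⟩ := Metric.mem_closure_iff.mp hUM _ hε₁
      obtain ⟨S₀, hS₀, hp₀S⟩ := mem_iUnion₂.mp hp₀U
      obtain ⟨f, hfc, hfx0, hfy0, hfmem, hfpt⟩ := string_fn M hM hsM hS₀
      obtain ⟨t₀, ht₀, rfl⟩ := hfpt p₀ hp₀S
      rw [Prod.dist_eq, Prod.dist_eq] at hdp
      have hdy : |y - t₀| < min ε (zM - v) := by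
        have := lt_of_le_of_lt (le_max_left _ _) (lt_of_le_of_lt (le_max_right _ _) hdp)
        rwa [Real.dist_eq] at this
      have hdz : |zM - f t₀| < min ε (zM - v) := by
        have := lt_of_le_of_lt (le_max_right _ _) (lt_of_le_of_lt (le_max_right _ _) hdp)
        rwa [Real.dist_eq] at this
      have hdyε : |y - t₀| < ε := lt_of_lt_of_le hdy (min_le_left _ _)
      have hft₀ : v < f t₀ := by
        have h1 := (abs_lt.mp hdz).2
        have h2 := min_le_right ε (zM - v)
        linarith
      -- a nearby N-string point below v
      have hε₂ : (0 : ℝ) < min ε (v - zN) := lt_min hε (by linarith)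
      obtain ⟨q₀, hq₀U, hdq⟩ := Metric.mem_closure_iff.mp hUN _ hε₂
      obtain ⟨S₀', hS₀', hq₀S⟩ := mem_iUnion₂.mp hq₀U
      obtain ⟨g, hgc, hgx0, hgy0, hgmem, hgpt⟩ := string_fn N hN hsN hS₀'
      obtain ⟨t₀', ht₀', rfl⟩ := hgpt q₀ hq₀S
      rw [Prod.dist_eq, Prod.dist_eq] at hdq
      have hdy' : |y - t₀'| < min ε (v - zN) := by
        have := lt_of_le_of_lt (le_max_left _ _) (lt_of_le_of_lt (le_max_right _ _) hdq)
        rwa [Real.dist_eq] at this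
      have hdz' : |zN - g t₀'| < min ε (v - zN) := by
        have := lt_of_le_of_lt (le_max_right _ _) (lt_of_le_of_lt (le_max_right _ _) hdq)
        rwa [Real.dist_eq] at this
      have hdy'ε : |y - t₀'| < ε := lt_of_lt_of_le hdy' (min_le_left _ _)
      have hgt₀' : g t₀' < v := by
        have h1 := (abs_lt.mp hdz').1
        have h2 := min_le_right ε (v - zN)
        linarith
      -- pointwise comparison of the two fixed strings
      have hcomp : ∀ t, t ∈ Icc M.c M.d → t ∈ Icc N.c N.d → f t < g t :=
        fun t h1 h2 => hsb S₀ hS₀ S₀' hS₀' _ (hfmem t h1) _ (hgmem t h2) rfl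
      -- case analysis on the position of t₀ relative to [N.c, N.d]
      rcases lt_or_ge t₀ N.c with hBc | h1
      · -- t₀ < N.c ≤ y; note N.c ∈ [M.c, M.d]
        have hNcM : N.c ∈ Icc M.c M.d := ⟨le_trans ht₀.1 (le_of_lt hBc), le_trans hyN.1 hyM.2⟩
        have hNcN : N.c ∈ Icc N.c N.d := ⟨le_refl _, hN.2.1⟩
        have hdNc : |y - N.c| < ε := by
          rw [abs_lt] at hdyε ⊢
          constructor <;> [linarith [hyN.1]; linarith [hBc, hdyε.2]]
        rcases le_or_gt (f N.c) v with hB1 | hB2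
        · -- crossing on f between t₀ and N.c
          obtain ⟨ξ, hξ, hfξ, hdξ⟩ := cross_aux hfc ht₀ hNcM
            (Set.mem_uIcc.mpr (Or.inr ⟨hB1, le_of_lt hft₀⟩)) hdyε hdNc
          exact ⟨(s, ξ, v), mem_union_left _ (mem_iUnion₂.mpr ⟨S₀, hS₀, hfξ ▸ hfmem ξ hξ⟩),
            dist_aux hdξ hε⟩
        · -- g N.c > f N.c > v > g t₀' : crossing on g between t₀' and N.c
          have hgNc : v < g N.c := lt_trans hB2 (hcomp N.c hNcM hNcN)
          obtain ⟨ξ, hξ, hgξ, hdξ⟩ := cross_aux hgc ht₀' hNcN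
            (Set.mem_uIcc.mpr (Or.inl ⟨le_of_lt hgt₀', le_of_lt hgNc⟩)) hdy'ε hdNc
          exact ⟨(s, ξ, v), mem_union_right _ (mem_iUnion₂.mpr ⟨S₀', hS₀', hgξ ▸ hgmem ξ hξ⟩),
            dist_aux hdξ hε⟩
      rcases le_or_gt t₀ N.d with h2 | hCd
      · -- t₀ ∈ [N.c, N.d] : crossing on g between t₀' and t₀
        have ht₀N : t₀ ∈ Icc N.c N.d := ⟨h1, h2⟩
        have hgt₀ : v < g t₀ := lt_trans hft₀ (hcomp t₀ ht₀ ht₀N)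
        obtain ⟨ξ, hξ, hgξ, hdξ⟩ := cross_aux hgc ht₀' ht₀N
          (Set.mem_uIcc.mpr (Or.inl ⟨le_of_lt hgt₀', le_of_lt hgt₀⟩)) hdy'ε hdyε
        exact ⟨(s, ξ, v), mem_union_right _ (mem_iUnion₂.mpr ⟨S₀', hS₀', hgξ ▸ hgmem ξ hξ⟩),
          dist_aux hdξ hε⟩
      · -- y ≤ N.d < t₀; note N.d ∈ [M.c, M.d]
        have hNdM : N.d ∈ Icc M.c M.d := ⟨le_trans hyM.1 hyN.2, le_trans (le_of_lt hCd) ht₀.2⟩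
        have hNdN : N.d ∈ Icc N.c N.d := ⟨hN.2.1, le_refl _⟩
        have hdNd : |y - N.d| < ε := by
          rw [abs_lt] at hdyε ⊢
          constructor <;> [linarith [hCd, hdyε.1]; linarith [hyN.2]]
        rcases le_or_gt (f N.d) v with hC1 | hC2
        · -- crossing on f between t₀ and N.d
          obtain ⟨ξ, hξ, hfξ, hdξ⟩ := cross_aux hfc ht₀ hNdM
            (Set.mem_uIcc.mpr (Or.inr ⟨hC1, le_of_lt hft₀⟩)) hdyε hdNd
          exact ⟨(s, ξ, v), mem_union_left _ (mem_iUnion₂.mpr ⟨S₀, hS₀, hfξ ▸ hfmem ξ hξ⟩),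
            dist_aux hdξ hε⟩
        · -- g N.d > f N.d > v > g t₀' : crossing on g between t₀' and N.d
          have hgNd : v < g N.d := lt_trans hC2 (hcomp N.d hNdM hNdN)
          obtain ⟨ξ, hξ, hgξ, hdξ⟩ := cross_aux hgc ht₀' hNdN
            (Set.mem_uIcc.mpr (Or.inl ⟨le_of_lt hgt₀', le_of_lt hgNd⟩)) hdy'ε hdNd
          exact ⟨(s, ξ, v), mem_union_right _ (mem_iUnion₂.mpr ⟨S₀', hS₀', hgξ ▸ hgmem ξ hξ⟩),
            dist_aux hdξ hε⟩
    rw [closure_union] at hkey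
    exact hkey
  -- connectedness contradiction
  have hpre : IsPreconnected (Icc zN zM) := isPreconnected_Icc
  have hdisjAB : Icc zN zM ∩ (A ∩ B) = ∅ := by
    ext z
    simp only [mem_inter_iff, mem_empty_iff_false, iff_false, not_and]
    exact fun _ h1 h2 => (hABdisj z h1 h2).elim
  rcases (isPreconnected_iff_subset_of_disjoint_closed.mp hpre) A B hAcl hBcl hcov hdisjAB with
    h | h
  · exact hABdisj zN (h ⟨le_refl _, le_of_lt hgt⟩) hzNB
  · exact hABdisj zM hzMA (h ⟨le_of_lt hgt, le_refl _⟩)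

end KeyLemma

/-- Fundamental lemma of mats: if `M` and `N` are disjoint mats whose
horizontal projections are translates of one another, and `M` is below `N`
above one common horizontal coordinate, then `M` is below `N` above every
common horizontal coordinate. -/
theorem statement11 (M N : MatData) (hM : IsMat M) (hN : IsMat N)
    (hdisj : Disjoint M.carrier N.carrier)
    (w : ℝ × ℝ)
    (hw : piH '' M.carrier =
      (fun q : ℝ × ℝ => (w.1 + q.1, w.2 + q.2)) '' (piH '' N.carrier))
    (x₁ y₁ z₁ z₁' x₂ y₂ z₂ z₂' : ℝ)
    (h1M : (x₁, y₁, z₁) ∈ M.carrier) (h1N : (x₁, y₁, z₁') ∈ N.carrier)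
    (h2M : (x₂, y₂, z₂) ∈ M.carrier) (h2N : (x₂, y₂, z₂') ∈ N.carrier)
    (h1 : z₁ < z₁') : z₂ < z₂' := by
  obtain ⟨h1Ma, h1Mc, -⟩ := carrier_spec M hM h1M
  obtain ⟨h1Na, h1Nc, -⟩ := carrier_spec N hN h1N
  obtain ⟨h2Ma, h2Mc, -⟩ := carrier_spec M hM h2M
  obtain ⟨h2Na, h2Nc, -⟩ := carrier_spec N hN h2N
  -- translate structure of the rectangles
  have hprojM := hM.2.2.2.1
  have hprojN := hN.2.2.2.1
  rw [hprojM, hprojN] at hw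
  have himg : (fun q : ℝ × ℝ => (w.1 + q.1, w.2 + q.2)) '' (Icc N.a N.b ×ˢ Icc N.c N.d)
      = Icc (w.1 + N.a) (w.1 + N.b) ×ˢ Icc (w.2 + N.c) (w.2 + N.d) := by
    rw [← Set.image_const_add_Icc w.1 N.a N.b, ← Set.image_const_add_Icc w.2 N.c N.d]
    rw [Set.prod_image_image_eq]
  rw [himg] at hw
  have hnonempty : (Icc M.a M.b ×ˢ Icc M.c M.d).Nonempty :=
    ⟨(x₁, y₁), ⟨h1Ma, h1Mc⟩⟩
  obtain ⟨hwa, hwc⟩ := (Set.prod_eq_prod_iff_of_nonempty hnonempty).mp hw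
  have hcd' : w.2 + N.c ≤ w.2 + N.d := by linarith [hN.2.1]
  have hceq : M.c = w.2 + N.c ∧ M.d = w.2 + N.d := by
    constructor
    · have h1 : M.c ∈ Icc (w.2 + N.c) (w.2 + N.d) := hwc ▸ ⟨le_refl _, hM.2.1⟩
      have h2 : w.2 + N.c ∈ Icc M.c M.d := hwc ▸ ⟨le_refl _, hcd'⟩
      exact le_antisymm h2.1 h1.1
    · have h1 : M.d ∈ Icc (w.2 + N.c) (w.2 + N.d) := hwc ▸ ⟨hM.2.1, le_refl _⟩
      have h2 : w.2 + N.d ∈ Icc M.c M.d := hwc ▸ ⟨hcd', le_refl _⟩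
      exact le_antisymm h1.2 h2.2
  have hcase : (M.c ≤ N.c ∧ M.d ≤ N.d) ∨ (N.c ≤ M.c ∧ N.d ≤ M.d) := by
    rcases le_total w.2 0 with h | h
    · exact Or.inl ⟨by linarith [hceq.1], by linarith [hceq.2]⟩
    · exact Or.inr ⟨by linarith [hceq.1], by linarith [hceq.2]⟩
  -- a pivot point of M present at every s ∈ [M.a, M.b], over the common y-interval
  obtain ⟨e, v, heM, heN, hpiv⟩ :
      ∃ e v, e ∈ Icc M.c M.d ∧ e ∈ Icc N.c N.d ∧
        ∀ s ∈ Icc M.a M.b, (s, e, v) ∈ M.carrier := by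
    rcases hcase with ⟨hcc, hdd⟩ | ⟨hcc, hdd⟩
    · refine ⟨M.d, M.y0, ⟨hM.2.1, le_refl _⟩, ⟨le_trans h1Nc.1 h1Mc.2, hdd⟩, ?_⟩
      intro s hs
      obtain ⟨S, hS⟩ := hM.2.2.2.2.1 s hs
      obtain ⟨f, -, -, hfy0, hfmem, -⟩ := string_fn M hM hs hS
      exact mem_carrier_of_string M hs hS (hfy0 ▸ hfmem M.d ⟨hM.2.1, le_refl _⟩)
    · refine ⟨M.c, M.x0, ⟨le_refl _, hM.2.1⟩, ⟨hcc, le_trans h1Mc.1 h1Nc.2⟩, ?_⟩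
      intro s hs
      obtain ⟨S, hS⟩ := hM.2.2.2.2.1 s hs
      obtain ⟨f, -, hfx0, -, hfmem, -⟩ := string_fn M hM hs hS
      exact mem_carrier_of_string M hs hS (hfx0 ▸ hfmem M.c ⟨le_refl _, hM.2.1⟩)
  -- at x₁ the mat M is (string-wise) below N
  have hbel1 : SBelow M N x₁ := by
    rcases dichotomy hM hN hdisj h1Ma h1Na hcase with h | h
    · exact h
    · exact absurd (below_carrier hN hM (Disjoint.symm hdisj) h1Na h1Ma h h1Nc h1Mc h1N h1M)
        (not_lt.mpr (le_of_lt h1))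
  -- connectedness in the first coordinate
  set I : Set ℝ := Icc (max M.a N.a) (min M.b N.b) with hI
  set u₁ : Set ℝ := Prod.fst '' (N.carrier ∩ {p : ℝ × ℝ × ℝ | p.2.1 = e ∧ v ≤ p.2.2}) with hu₁
  set u₂ : Set ℝ := Prod.fst '' (N.carrier ∩ {p : ℝ × ℝ × ℝ | p.2.1 = e ∧ p.2.2 ≤ v}) with hu₂
  have hmemu₁ : ∀ s, s ∈ u₁ → ∃ z, (s, e, z) ∈ N.carrier ∧ v ≤ z := by
    intro s hs
    obtain ⟨⟨p1, p2, p3⟩, ⟨hpN, hp1, hp2⟩, hfst⟩ := hs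
    simp only at hp1 hp2 hfst
    subst hp1; subst hfst
    exact ⟨p3, hpN, hp2⟩
  have hmemu₂ : ∀ s, s ∈ u₂ → ∃ z, (s, e, z) ∈ N.carrier ∧ z ≤ v := by
    intro s hs
    obtain ⟨⟨p1, p2, p3⟩, ⟨hpN, hp1, hp2⟩, hfst⟩ := hs
    simp only at hp1 hp2 hfst
    subst hp1; subst hfst
    exact ⟨p3, hpN, hp2⟩
  have hImem : ∀ s ∈ I, s ∈ Icc M.a M.b ∧ s ∈ Icc N.a N.b := by
    intro s hs
    rw [hI, mem_Icc] at hs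
    exact ⟨⟨le_trans (le_max_left _ _) hs.1, le_trans hs.2 (min_le_left _ _)⟩,
      ⟨le_trans (le_max_right _ _) hs.1, le_trans hs.2 (min_le_right _ _)⟩⟩
  -- SBelow at s gives: the N-fiber over (s, e) is strictly above v
  have hfibgt : ∀ s ∈ I, SBelow M N s → ∀ z, (s, e, z) ∈ N.carrier → v < z := by
    intro s hs hsb z hz
    obtain ⟨hsMab, hsNab⟩ := hImem s hs
    exact below_carrier hM hN hdisj hsMab hsNab hsb heM heN (hpiv s hsMab) hz
  have hfiblt : ∀ s ∈ I, SBelow N M s → ∀ z, (s, e, z) ∈ N.carrier → z < v := by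
    intro s hs hsb z hz
    obtain ⟨hsMab, hsNab⟩ := hImem s hs
    exact below_carrier hN hM (Disjoint.symm hdisj) hsNab hsMab hsb heN heM hz (hpiv s hsMab)
  have hclosed₁ : IsClosed u₁ := by
    rw [hu₁]
    refine IsCompact.isClosed (IsCompact.image (hN.2.2.1.inter_right ?_) continuous_fst)
    exact (isClosed_eq (continuous_fst.comp continuous_snd) continuous_const).inter
      (isClosed_le continuous_const (continuous_snd.comp continuous_snd))
  have hclosed₂ : IsClosed u₂ := by
    rw [hu₂]
    refine IsCompact.isClosed (IsCompact.image (hN.2.2.1.inter_right ?_) continuous_fst)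
    exact (isClosed_eq (continuous_fst.comp continuous_snd) continuous_const).inter
      (isClosed_le (continuous_snd.comp continuous_snd) continuous_const)
  have hcoverI : I ⊆ u₁ ∪ u₂ := by
    intro s hs
    obtain ⟨hsMab, hsNab⟩ := hImem s hs
    obtain ⟨z, hz⟩ := exists_fiber N hN hsNab heN
    rcases le_total v z with h | h
    · exact Or.inl ⟨(s, e, z), ⟨hz, rfl, h⟩, rfl⟩
    · exact Or.inr ⟨(s, e, z), ⟨hz, rfl, h⟩, rfl⟩
  have hdisjI : I ∩ (u₁ ∩ u₂) = ∅ := by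
    ext s
    simp only [mem_inter_iff, mem_empty_iff_false, iff_false, not_and]
    intro hsI h₁ h₂
    obtain ⟨z, hzN, hvz⟩ := hmemu₁ s h₁
    obtain ⟨z', hz'N, hz'v⟩ := hmemu₂ s h₂
    obtain ⟨hsMab, hsNab⟩ := hImem s hsI
    rcases dichotomy hM hN hdisj hsMab hsNab hcase with h | h
    · exact absurd (hfibgt s hsI h z' hz'N) (not_lt.mpr hz'v)
    · exact absurd (hfiblt s hsI h z hzN) (not_lt.mpr hvz)
  have hx₁I : x₁ ∈ I := by
    rw [hI, mem_Icc]
    exact ⟨max_le h1Ma.1 h1Na.1, le_min h1Ma.2 h1Na.2⟩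
  have hx₂I : x₂ ∈ I := by
    rw [hI, mem_Icc]
    exact ⟨max_le h2Ma.1 h2Na.1, le_min h2Ma.2 h2Na.2⟩
  have hsubI : I ⊆ u₁ := by
    rcases isPreconnected_iff_subset_of_disjoint_closed.mp isPreconnected_Icc
        u₁ u₂ hclosed₁ hclosed₂ hcoverI hdisjI with h | h
    · exact h
    · exfalso
      obtain ⟨z', hz'N, hz'v⟩ := hmemu₂ x₁ (h hx₁I)
      exact absurd (hfibgt x₁ hx₁I hbel1 z' hz'N) (not_lt.mpr hz'v)
  -- deduce SBelow at x₂ and conclude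
  have hbel2 : SBelow M N x₂ := by
    rcases dichotomy hM hN hdisj h2Ma h2Na hcase with h | h
    · exact h
    · exfalso
      obtain ⟨z, hzN, hvz⟩ := hmemu₁ x₂ (hsubI hx₂I)
      exact absurd (hfiblt x₂ hx₂I h z hzN) (not_lt.mpr hvz)
  exact below_carrier hM hN hdisj h2Ma h2Na hbel2 h2Mc h2Nc h2M h2N
end

section
/- Fix reals a, b, c, d > 0, set e = 2(a+b+c)+d and h = b+c, and let ε > 0 satisfy 4ε < h. Let A be any mat whose mat-distance from T is at most ε. Then for every s ∈ [0,5] and every s-string S' of A, there is exactly one s-string S of T with sup_{z∈[0,e]} |f_{S'}(z) − f_S(z)| ≤ 2ε. -/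
open Set
open scoped ENNReal Classical

/-!
Existence comes from the mat-distance bound: each string `S'` of `A` lies within `ε < 2ε` of
some string of `T`.
For uniqueness, evaluate at the midpoint `m = a + b + c + d/2` of `[0, e]`: there the flat,
up-bridge and down-bridge profiles take the values `0`, `b + c` and `-b`, and flat and down
strings never occur at the same `s`. So two different strings of `T` at the same `s` differ by
at least `h = b + c > 4ε` at `m`, and `S'` cannot be `2ε`-close to both.
-/

lemma edist_le_sDist {S S' : Set (ℝ × ℝ × ℝ)} {p q : ℝ × ℝ × ℝ} (hp : p ∈ S) (hq : q ∈ S')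
    (h : p.2.1 = q.2.1) : edist p.2.2 q.2.2 ≤ sDist S S' :=
  le_iSup₂_of_le p hp <| le_iSup₂_of_le q hq <| le_iSup_of_le h le_rfl

lemma abs_sub_le_of_sDist_strGraph_le {S : Set (ℝ × ℝ × ℝ)} {s e z y r : ℝ} {g : ℝ → ℝ}
    (hp : (s, z, y) ∈ S) (hz : z ∈ Icc 0 e) (hr : 0 ≤ r)
    (h : sDist S (strGraph s e g) ≤ ENNReal.ofReal r) : |y - g z| ≤ r := by
  have hq : (s, z, g z) ∈ strGraph s e g := ⟨z, hz, rfl⟩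
  have := (edist_le_sDist hp hq rfl).trans h
  rwa [edist_le_ofReal hr, Real.dist_eq] at this

lemma rect_eq_of_matDist_ne_top {M M' : MatData} (h : matDist M M' ≠ ⊤) :
    Icc M.a M.b ×ˢ Icc M.c M.d = Icc M'.a M'.b ×ˢ Icc M'.c M'.d := by
  by_contra hne
  exact h (if_neg hne)

lemma Icc_eq_Icc_of_matDist_ne_top {M M' : MatData} (h : matDist M M' ≠ ⊤)
    (hab : M'.a ≤ M'.b) (hcd : M'.c ≤ M'.d) :
    Icc M.a M.b = Icc M'.a M'.b ∧ Icc M.c M.d = Icc M'.c M'.d := by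
  have hrect := rect_eq_of_matDist_ne_top h
  exact (prod_eq_prod_iff_of_nonempty <|
    hrect ▸ (nonempty_Icc.2 hab).prod (nonempty_Icc.2 hcd)).1 hrect

lemma iInf_sDist_le_matDist {M M' : MatData} {s : ℝ} {S : Set (ℝ × ℝ × ℝ)}
    (hs : s ∈ Icc M.a M.b) (hS : S ∈ M.strings s) :
    ⨅ S' ∈ M'.strings s, sDist S S' ≤ matDist M M' := by
  unfold matDist
  split_ifs
  · exact le_iSup₂_of_le s hs <| le_max_of_le_left <| le_iSup₂_of_le S hS le_rfl
  · exact le_top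

section Midpoint

variable {a b c d : ℝ}

lemma fUp_midpoint (hb : 0 ≤ b) (hc : 0 ≤ c) (hd : 0 ≤ d) :
    fUp a b c d (a + b + c + d / 2) = b + c := by
  unfold fUp
  rw [show a + b + c + d / 2 - a = b + c + d / 2 by ring,
    show a + 2 * (b + c) + d - (a + b + c + d / 2) = b + c + d / 2 by ring,
    min_self, min_eq_left (by linarith), max_eq_right (by linarith)]

lemma fDown_midpoint (hb : 0 ≤ b) (hc : 0 ≤ c) (hd : 0 ≤ d) :
    fDown a b c d (a + b + c + d / 2) = -b := by
  unfold fDown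
  rw [show a - (a + b + c + d / 2) = -(b + c + d / 2) by ring,
    show a + b + c + d / 2 - (a + 2 * (b + c) + d) = -(b + c + d / 2) by ring,
    max_self, max_eq_left (by linarith), min_eq_right (by linarith)]

lemma Tstrings_separated_at_midpoint (hb : 0 ≤ b) (hc : 0 ≤ c) (hd : 0 ≤ d) {s : ℝ}
    {S₁ S₂ : Set (ℝ × ℝ × ℝ)} (h₁ : S₁ ∈ Tstrings a b c d s) (h₂ : S₂ ∈ Tstrings a b c d s)
    (hne : S₁ ≠ S₂) :
    ∃ g₁ g₂ : ℝ → ℝ, S₁ = strGraph s (2 * (a + b + c) + d) g₁ ∧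
      S₂ = strGraph s (2 * (a + b + c) + d) g₂ ∧
      b + c ≤ |g₁ (a + b + c + d / 2) - g₂ (a + b + c + d / 2)| := by
  rcases h₁ with ⟨hs₁, rfl⟩ | ⟨hs₁, rfl⟩ | ⟨hs₁, rfl⟩ <;>
    rcases h₂ with ⟨hs₂, rfl⟩ | ⟨hs₂, rfl⟩ | ⟨hs₂, rfl⟩
  all_goals first
    | exact absurd rfl hne
    | refine ⟨_, _, rfl, rfl, le_abs.2 ?_⟩
      simp only [fUp_midpoint hb hc hd, fDown_midpoint hb hc hd]
      first | left; linarith | right; linarith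
    | simp only [mem_union, mem_Icc] at hs₁ hs₂
      grind

end Midpoint

/-- If `4ε < h = b + c` and `A` is a mat within mat-distance `ε` of `T`, then
every string of `A` is `2ε`-close to a unique string of `T`. -/
theorem statement12 (a b c d : ℝ) (ha : 0 < a) (hb : 0 < b) (hc : 0 < c)
    (hd : 0 < d) (ε : ℝ) (hε : 0 < ε) (hεh : 4 * ε < b + c)
    (A : MatData) (hA : IsMat A)
    (hdist : matDist A (TMat a b c d) ≤ ENNReal.ofReal ε) :
    ∀ s ∈ Icc (0 : ℝ) 5, ∀ S' ∈ A.strings s,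
      ∃! S : Set (ℝ × ℝ × ℝ),
        S ∈ Tstrings a b c d s ∧ sDist S' S ≤ ENNReal.ofReal (2 * ε) := by
  intro s hs S' hS'
  have hfin : matDist A (TMat a b c d) ≠ ⊤ := ne_top_of_le_ne_top ENNReal.ofReal_ne_top hdist
  obtain ⟨hAB, hCD⟩ := Icc_eq_Icc_of_matDist_ne_top hfin (by norm_num [TMat])
    (by simp only [TMat]; positivity)
  have hsA : s ∈ Icc A.a A.b := hAB ▸ hs
  obtain ⟨S, hS, hSS'⟩ : ∃ S ∈ Tstrings a b c d s, sDist S' S < ENNReal.ofReal (2 * ε) := by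
    have hlt := (iInf_sDist_le_matDist hsA hS').trans_lt <| hdist.trans_lt <|
      (ENNReal.ofReal_lt_ofReal_iff (by linarith)).2 (by linarith : ε < 2 * ε)
    simp only [iInf_lt_iff, exists_prop] at hlt
    exact hlt
  refine ⟨S, ⟨hS, hSS'.le⟩, fun S₂ ⟨hS₂, hS₂S'⟩ => by_contra fun hne => ?_⟩
  obtain ⟨g₂, g, rfl, rfl, hsep⟩ := Tstrings_separated_at_midpoint hb.le hc.le hd.le hS₂ hS hne
  obtain ⟨-, -, -, -, -, hstrings, -⟩ := hA
  obtain ⟨f', -, -, -, hS'eq⟩ := hstrings s hsA S' hS'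
  have hm : a + b + c + d / 2 ∈ Icc 0 (2 * (a + b + c) + d) := ⟨by positivity, by linarith⟩
  set m := a + b + c + d / 2
  have hp : (s, m, f' m) ∈ S' := hS'eq ▸ ⟨m, hCD ▸ hm, rfl⟩
  have h₂ := abs_sub_le_of_sDist_strGraph_le hp hm (by linarith) hS₂S'
  have h₁ := abs_sub_le_of_sDist_strGraph_le hp hm (by linarith) hSS'.le
  linarith [abs_sub_le (g₂ m) (f' m) (g m), abs_sub_comm (g₂ m) (f' m)]
end

section
/- Fix reals a, b, c, d > 0, set e = 2(a+b+c)+d and h = b+c, and suppose ε > 0 satisfies ε < min(b/7, c/8) and d ≥ 2e/3. Let A₁ and A₂ be mats each at mat-distance at most ε from T³, let v₁ = (x₁,y₁,z₁) and v₂ = (x₂,y₂,z₂) be points of [0,5]×[0,e]×ℝ, and suppose the translates A₁ − v₁ and A₂ − v₂ are disjoint. If |x₁ − x₂| ≤ 4, then |z₁ − z₂| ≥ h − 2ε. -/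
open Set
open scoped ENNReal Classical

section AuxMats

open Filter Topology

private lemma Icc_eq_endpoints {x y x' y' : ℝ} (h1 : x ≤ y) (h2 : x' ≤ y')
    (h : Icc x y = Icc x' y') : x = x' ∧ y = y' := by
  constructor
  · rw [← csInf_Icc h1, h, csInf_Icc h2]
  · rw [← csSup_Icc h1, h, csSup_Icc h2]

private lemma prod_Icc_eq {x y u v x' y' u' v' : ℝ} (h1 : x ≤ y) (h2 : u ≤ v)
    (h1' : x' ≤ y') (h2' : u' ≤ v')
    (h : Icc x y ×ˢ Icc u v = Icc x' y' ×ˢ Icc u' v') :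
    x = x' ∧ y = y' ∧ u = u' ∧ v = v' := by
  have hIcc1 : Icc x y = Icc x' y' := by
    ext t
    constructor
    · intro ht
      have hm : ((t, u) : ℝ × ℝ) ∈ Icc x' y' ×ˢ Icc u' v' := by
        rw [← h]; exact ⟨ht, le_refl u, h2⟩
      exact hm.1
    · intro ht
      have hm : ((t, u') : ℝ × ℝ) ∈ Icc x y ×ˢ Icc u v := by
        rw [h]; exact ⟨ht, le_refl u', h2'⟩
      exact hm.1
  have hIcc2 : Icc u v = Icc u' v' := by
    ext t
    constructor
    · intro ht
      have hm : ((x, t) : ℝ × ℝ) ∈ Icc x' y' ×ˢ Icc u' v' := by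
        rw [← h]; exact ⟨⟨le_refl x, h1⟩, ht⟩
      exact hm.2
    · intro ht
      have hm : ((x', t) : ℝ × ℝ) ∈ Icc x y ×ˢ Icc u v := by
        rw [h]; exact ⟨⟨le_refl x', h1'⟩, ht⟩
      exact hm.2
  obtain ⟨e1, e2⟩ := Icc_eq_endpoints h1 h1' hIcc1
  obtain ⟨e3, e4⟩ := Icc_eq_endpoints h2 h2' hIcc2
  exact ⟨e1, e2, e3, e4⟩

/-- The graph of `f : [-E, 2E] → ℝ` at first coordinate `s`. -/
private def graphOf (E s : ℝ) (f : ℝ → ℝ) : Set (ℝ × ℝ × ℝ) :=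
  {p : ℝ × ℝ × ℝ | ∃ z ∈ Icc (-E) (2 * E), p = (s, z, f z)}

/-- `f` is (the defining function of) a string of the mat `M` at `s`. -/
private def StrOf (M : MatData) (E s : ℝ) (f : ℝ → ℝ) : Prop :=
  graphOf E s f ∈ M.strings s ∧ ContinuousOn f (Icc (-E) (2 * E)) ∧
    f (-E) = M.x0 ∧ f (2 * E) = M.y0

private lemma exists_str {M : MatData} {E : ℝ} (hM : IsMat M)
    (hrect : M.a = 0 ∧ M.b = 5 ∧ M.c = -E ∧ M.d = 2 * E)
    {s : ℝ} (hs : s ∈ Icc (0:ℝ) 5) {S : Set (ℝ × ℝ × ℝ)} (hS : S ∈ M.strings s) :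
    ∃ f, StrOf M E s f ∧ S = graphOf E s f := by
  have hs' : s ∈ Icc M.a M.b := by rw [hrect.1, hrect.2.1]; exact hs
  obtain ⟨f, hcont, hcv, hdv, hgr⟩ := hM.2.2.2.2.2.1 s hs' S hS
  simp only [hrect.2.2.1, hrect.2.2.2] at hcont hcv hdv hgr
  refine ⟨f, ⟨?_, hcont, hcv, hdv⟩, hgr⟩
  show {p : ℝ × ℝ × ℝ | ∃ z ∈ Icc (-E) (2 * E), p = (s, z, f z)} ∈ M.strings s
  rw [← hgr]; exact hS

private lemma exists_str' {M : MatData} {E : ℝ} (hM : IsMat M)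
    (hrect : M.a = 0 ∧ M.b = 5 ∧ M.c = -E ∧ M.d = 2 * E)
    {s : ℝ} (hs : s ∈ Icc (0:ℝ) 5) : ∃ f, StrOf M E s f := by
  have hs' : s ∈ Icc M.a M.b := by rw [hrect.1, hrect.2.1]; exact hs
  obtain ⟨S, hS⟩ := hM.2.2.2.2.1 s hs'
  obtain ⟨f, hf, -⟩ := exists_str hM hrect hs hS
  exact ⟨f, hf⟩

private lemma str_mem_carrier {M : MatData} {E : ℝ} (hM : IsMat M)
    (hrect : M.a = 0 ∧ M.b = 5 ∧ M.c = -E ∧ M.d = 2 * E)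
    {s z : ℝ} {f : ℝ → ℝ} (hs : s ∈ Icc (0:ℝ) 5) (hf : StrOf M E s f)
    (hz : z ∈ Icc (-E) (2 * E)) : (s, z, f z) ∈ M.carrier := by
  have h1 : (s, z, f z) ∈ graphOf E s f := ⟨z, hz, rfl⟩
  have h2 : (s, z, f z) ∈ ⋃ S ∈ M.strings s, S := mem_biUnion hf.1 h1
  have h3 : (s, z, f z) ∈ M.sect s := subset_closure h2
  have hs' : s ∈ Icc M.a M.b := by rw [hrect.1, hrect.2.1]; exact hs
  exact mem_biUnion hs' h3

private lemma carrier_mem_sect {M : MatData} (hM : IsMat M) {p : ℝ × ℝ × ℝ}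
    (hp : p ∈ M.carrier) : p.1 ∈ Icc M.a M.b ∧ p ∈ M.sect p.1 := by
  have hp' : p ∈ ⋃ s ∈ Icc M.a M.b, M.sect s := hp
  obtain ⟨s, hs, hps⟩ := mem_iUnion₂.mp hp'
  have h8 := hM.2.2.2.2.2.2.2 s hs hps
  rw [← h8.1] at hs hps
  exact ⟨hs, hps⟩

/-- Triple concatenation of the same `T`-string function. -/
private def triple3 (a b c d s : ℝ) (f : ℝ → ℝ) : Set (ℝ × ℝ × ℝ) :=
  (fun p : ℝ × ℝ × ℝ => (p.1, p.2.1 - (2 * (a + b + c) + d), p.2.2)) ''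
      strGraph s (2 * (a + b + c) + d) f ∪
    strGraph s (2 * (a + b + c) + d) f ∪
    (fun p : ℝ × ℝ × ℝ => (p.1, p.2.1 + (2 * (a + b + c) + d), p.2.2)) ''
      strGraph s (2 * (a + b + c) + d) f

private lemma triple3_mem_flat {a b c d s : ℝ} (h : s ∈ Icc (0:ℝ) 1 ∪ Icc (4:ℝ) 5) :
    triple3 a b c d s (fun _ => 0) ∈ T3strings a b c d s :=
  ⟨_, Or.inl ⟨h, rfl⟩, _, Or.inl ⟨h, rfl⟩, _, Or.inl ⟨h, rfl⟩, rfl⟩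

private lemma triple3_mem_up {a b c d s : ℝ} (h : s ∈ Icc (1:ℝ) 2 ∪ Icc (3:ℝ) 4) :
    triple3 a b c d s (fUp a b c d) ∈ T3strings a b c d s :=
  ⟨_, Or.inr (Or.inl ⟨h, rfl⟩), _, Or.inr (Or.inl ⟨h, rfl⟩), _,
    Or.inr (Or.inl ⟨h, rfl⟩), rfl⟩

private lemma triple3_pt_mid {a b c d s : ℝ} {f : ℝ → ℝ} {w : ℝ}
    (hw : w ∈ Icc (0:ℝ) (2 * (a + b + c) + d)) :
    (s, w, f w) ∈ triple3 a b c d s f :=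
  Or.inl (Or.inr ⟨w, hw, rfl⟩)

private lemma triple3_pt_left {a b c d s : ℝ} {f : ℝ → ℝ} {w : ℝ}
    (hw : w ∈ Icc (0:ℝ) (2 * (a + b + c) + d)) :
    (s, w - (2 * (a + b + c) + d), f w) ∈ triple3 a b c d s f :=
  Or.inl (Or.inl ⟨(s, w, f w), ⟨w, hw, rfl⟩, rfl⟩)

private lemma triple3_pt_right {a b c d s : ℝ} {f : ℝ → ℝ} {w : ℝ}
    (hw : w ∈ Icc (0:ℝ) (2 * (a + b + c) + d)) :
    (s, w + (2 * (a + b + c) + d), f w) ∈ triple3 a b c d s f :=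
  Or.inr ⟨(s, w, f w), ⟨w, hw, rfl⟩, rfl⟩

private lemma flat3_pt {a b c d s w : ℝ} (hE : 0 < 2 * (a + b + c) + d)
    (hw : w ∈ Icc (-(2 * (a + b + c) + d)) (2 * (2 * (a + b + c) + d))) :
    (s, w, (0:ℝ)) ∈ triple3 a b c d s (fun _ => 0) := by
  rcases le_total w 0 with h | h
  · have h1 := triple3_pt_left (a := a) (b := b) (c := c) (d := d) (s := s)
      (f := fun _ => (0:ℝ)) (w := w + (2 * (a + b + c) + d))
      ⟨by linarith [hw.1], by linarith⟩
    have he : w + (2 * (a + b + c) + d) - (2 * (a + b + c) + d) = w := by ring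
    rw [he] at h1
    exact h1
  · rcases le_total w (2 * (a + b + c) + d) with h2 | h2
    · exact triple3_pt_mid ⟨h, h2⟩
    · have h1 := triple3_pt_right (a := a) (b := b) (c := c) (d := d) (s := s)
        (f := fun _ => (0:ℝ)) (w := w - (2 * (a + b + c) + d))
        ⟨by linarith, by linarith [hw.2]⟩
      have he : w - (2 * (a + b + c) + d) + (2 * (a + b + c) + d) = w := by ring
      rw [he] at h1
      exact h1

private lemma fUp_peak (a b c d : ℝ) (hb : 0 ≤ b) (hc : 0 ≤ c) (hd : 0 ≤ d) :
    fUp a b c d (a + (b + c)) = b + c := by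
  unfold fUp
  rw [show a + (b + c) - a = b + c by ring,
      show a + 2 * (b + c) + d - (a + (b + c)) = b + c + d by ring,
      min_eq_left (by linarith : b + c ≤ b + c + d), min_self,
      max_eq_right (by linarith : (0:ℝ) ≤ b + c)]

end AuxMats
section AuxReach

open Filter Topology

private lemma reach_lemma {M : MatData} {E : ℝ} (hM : IsMat M)
    (hrect : M.a = 0 ∧ M.b = 5 ∧ M.c = -E ∧ M.d = 2 * E)
    {zA cc t : ℝ} (hzA : zA ∈ Icc (-E) (2 * E)) (ht : t ∈ Icc (0:ℝ) 5)
    {w : ℕ → ℝ} (hw : ∀ n, w n ∈ Icc (0:ℝ) 5)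
    (hwt : Tendsto w atTop (nhds t))
    {fs : ℕ → ℝ → ℝ} (hfs : ∀ n, StrOf M E (w n) (fs n))
    (hup : ∀ n, cc ≤ fs n zA)
    (hdown : ∀ f, StrOf M E t f → f zA < cc) :
    (t, zA, cc) ∈ M.carrier := by
  classical
  have hpmem : ∀ n, ((w n, zA, fs n zA) : ℝ × ℝ × ℝ) ∈ M.carrier :=
    fun n => str_mem_carrier hM hrect (hw n) (hfs n) hzA
  obtain ⟨q, hq, φ, hφ, hconv⟩ := hM.2.2.1.tendsto_subseq hpmem
  have hq1 : q.1 = t := by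
    have l1 : Tendsto (fun n => w (φ n)) atTop (nhds q.1) :=
      (continuous_fst.tendsto q).comp hconv
    have l2 : Tendsto (fun n => w (φ n)) atTop (nhds t) :=
      hwt.comp hφ.tendsto_atTop
    exact tendsto_nhds_unique l1 l2
  have hq2 : q.2.1 = zA := by
    have l1 : Tendsto (fun _ : ℕ => zA) atTop (nhds q.2.1) :=
      ((continuous_fst.comp continuous_snd).tendsto q).comp hconv
    exact tendsto_nhds_unique l1 tendsto_const_nhds
  have hconv3 : Tendsto (fun n => fs (φ n) zA) atTop (nhds q.2.2) :=
    ((continuous_snd.comp continuous_snd).tendsto q).comp hconv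
  have hq3 : cc ≤ q.2.2 := ge_of_tendsto' hconv3 (fun n => hup (φ n))
  rcases eq_or_lt_of_le hq3 with heq | hlt3
  · have hqq : (t, zA, cc) = q := by rw [← hq1, ← hq2, heq]
    rw [hqq]; exact hq
  · have hqsect : q ∈ M.sect t := by
      have h := carrier_mem_sect hM hq
      rw [hq1] at h
      exact h.2
    have hclosed : IsClosed M.carrier := hM.2.2.1.isClosed
    rw [← hclosed.closure_eq, Metric.mem_closure_iff]
    intro η hη
    have hq' : q ∈ closure (⋃ S ∈ M.strings t, S) := hqsect
    rw [Metric.mem_closure_iff] at hq'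
    obtain ⟨r, hr, hdistqr⟩ := hq' (min η (q.2.2 - cc)) (lt_min hη (by linarith))
    obtain ⟨S, hS, hrS⟩ := mem_iUnion₂.mp hr
    obtain ⟨f, hfstr, hSeq⟩ := exists_str hM hrect ht hS
    rw [hSeq] at hrS
    obtain ⟨ζ, hζ, rfl⟩ := hrS
    have hd1 : dist q.2.1 ζ ≤ dist q (t, ζ, f ζ) := by
      calc dist q.2.1 ζ ≤ dist q.2 ((ζ, f ζ) : ℝ × ℝ) := by
            rw [Prod.dist_eq]; exact le_max_left _ _
        _ ≤ dist q (t, ζ, f ζ) := by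
            rw [Prod.dist_eq]; exact le_max_right _ _
    have hd2 : dist q.2.2 (f ζ) ≤ dist q (t, ζ, f ζ) := by
      calc dist q.2.2 (f ζ) ≤ dist q.2 ((ζ, f ζ) : ℝ × ℝ) := by
            rw [Prod.dist_eq]; exact le_max_right _ _
        _ ≤ dist q (t, ζ, f ζ) := by
            rw [Prod.dist_eq]; exact le_max_right _ _
    have hfζ : cc < f ζ := by
      have h1 : dist q.2.2 (f ζ) < q.2.2 - cc :=
        lt_of_le_of_lt hd2 (lt_of_lt_of_le hdistqr (min_le_right _ _))
      rw [Real.dist_eq] at h1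
      have := abs_lt.mp h1
      linarith [this.1]
    have hfzA : f zA < cc := hdown f hfstr
    have hsub : uIcc zA ζ ⊆ Icc (-E) (2 * E) := ordConnected_Icc.uIcc_subset hzA hζ
    have hcont : ContinuousOn f (uIcc zA ζ) := hfstr.2.1.mono hsub
    have hmem : cc ∈ uIcc (f zA) (f ζ) := by
      rw [Set.mem_uIcc]; exact Or.inl ⟨hfzA.le, hfζ.le⟩
    obtain ⟨ξ, hξ, hfξ⟩ := intermediate_value_uIcc hcont hmem
    have hξIcc : ξ ∈ Icc (-E) (2 * E) := hsub hξ
    have hptc : (t, ξ, cc) ∈ M.carrier := by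
      have h := str_mem_carrier hM hrect ht hfstr hξIcc
      rwa [hfξ] at h
    refine ⟨(t, ξ, cc), hptc, ?_⟩
    have hζη : |zA - ζ| < η := by
      have h1 : dist q.2.1 ζ < η :=
        lt_of_le_of_lt hd1 (lt_of_lt_of_le hdistqr (min_le_left _ _))
      rw [hq2, Real.dist_eq] at h1
      exact h1
    have hxi : |zA - ξ| ≤ |zA - ζ| := by
      rcases le_total zA ζ with hle | hle
      · rw [uIcc_of_le hle] at hξ
        rw [abs_of_nonpos (by linarith [hξ.1]), abs_of_nonpos (by linarith)]
        linarith [hξ.2]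
      · rw [uIcc_of_ge hle] at hξ
        rw [abs_of_nonneg (by linarith [hξ.2]), abs_of_nonneg (by linarith)]
        linarith [hξ.1]
    rw [Prod.dist_eq, Prod.dist_eq]
    simp only [dist_self]
    rw [Real.dist_eq]
    exact max_lt hη (max_lt (lt_of_le_of_lt hxi hζη) hη)

private lemma reach_lemma' {M : MatData} {E : ℝ} (hM : IsMat M)
    (hrect : M.a = 0 ∧ M.b = 5 ∧ M.c = -E ∧ M.d = 2 * E)
    {zA cc t : ℝ} (hzA : zA ∈ Icc (-E) (2 * E)) (ht : t ∈ Icc (0:ℝ) 5)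
    {w : ℕ → ℝ} (hw : ∀ n, w n ∈ Icc (0:ℝ) 5)
    (hwt : Tendsto w atTop (nhds t))
    {fs : ℕ → ℝ → ℝ} (hfs : ∀ n, StrOf M E (w n) (fs n))
    (hup : ∀ n, fs n zA ≤ cc)
    (hdown : ∀ f, StrOf M E t f → cc < f zA) :
    (t, zA, cc) ∈ M.carrier := by
  classical
  have hpmem : ∀ n, ((w n, zA, fs n zA) : ℝ × ℝ × ℝ) ∈ M.carrier :=
    fun n => str_mem_carrier hM hrect (hw n) (hfs n) hzA
  obtain ⟨q, hq, φ, hφ, hconv⟩ := hM.2.2.1.tendsto_subseq hpmem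
  have hq1 : q.1 = t := by
    have l1 : Tendsto (fun n => w (φ n)) atTop (nhds q.1) :=
      (continuous_fst.tendsto q).comp hconv
    have l2 : Tendsto (fun n => w (φ n)) atTop (nhds t) :=
      hwt.comp hφ.tendsto_atTop
    exact tendsto_nhds_unique l1 l2
  have hq2 : q.2.1 = zA := by
    have l1 : Tendsto (fun _ : ℕ => zA) atTop (nhds q.2.1) :=
      ((continuous_fst.comp continuous_snd).tendsto q).comp hconv
    exact tendsto_nhds_unique l1 tendsto_const_nhds
  have hconv3 : Tendsto (fun n => fs (φ n) zA) atTop (nhds q.2.2) :=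
    ((continuous_snd.comp continuous_snd).tendsto q).comp hconv
  have hq3 : q.2.2 ≤ cc := le_of_tendsto' hconv3 (fun n => hup (φ n))
  rcases eq_or_lt_of_le hq3 with heq | hlt3
  · have hqq : (t, zA, cc) = q := by rw [← hq1, ← hq2, ← heq]
    rw [hqq]; exact hq
  · have hqsect : q ∈ M.sect t := by
      have h := carrier_mem_sect hM hq
      rw [hq1] at h
      exact h.2
    have hclosed : IsClosed M.carrier := hM.2.2.1.isClosed
    rw [← hclosed.closure_eq, Metric.mem_closure_iff]
    intro η hη
    have hq' : q ∈ closure (⋃ S ∈ M.strings t, S) := hqsect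
    rw [Metric.mem_closure_iff] at hq'
    obtain ⟨r, hr, hdistqr⟩ := hq' (min η (cc - q.2.2)) (lt_min hη (by linarith))
    obtain ⟨S, hS, hrS⟩ := mem_iUnion₂.mp hr
    obtain ⟨f, hfstr, hSeq⟩ := exists_str hM hrect ht hS
    rw [hSeq] at hrS
    obtain ⟨ζ, hζ, rfl⟩ := hrS
    have hd1 : dist q.2.1 ζ ≤ dist q (t, ζ, f ζ) := by
      calc dist q.2.1 ζ ≤ dist q.2 ((ζ, f ζ) : ℝ × ℝ) := by
            rw [Prod.dist_eq]; exact le_max_left _ _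
        _ ≤ dist q (t, ζ, f ζ) := by
            rw [Prod.dist_eq]; exact le_max_right _ _
    have hd2 : dist q.2.2 (f ζ) ≤ dist q (t, ζ, f ζ) := by
      calc dist q.2.2 (f ζ) ≤ dist q.2 ((ζ, f ζ) : ℝ × ℝ) := by
            rw [Prod.dist_eq]; exact le_max_right _ _
        _ ≤ dist q (t, ζ, f ζ) := by
            rw [Prod.dist_eq]; exact le_max_right _ _
    have hfζ : f ζ < cc := by
      have h1 : dist q.2.2 (f ζ) < cc - q.2.2 :=
        lt_of_le_of_lt hd2 (lt_of_lt_of_le hdistqr (min_le_right _ _))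
      rw [Real.dist_eq] at h1
      have := abs_lt.mp h1
      linarith [this.2]
    have hfzA : cc < f zA := hdown f hfstr
    have hsub : uIcc zA ζ ⊆ Icc (-E) (2 * E) := ordConnected_Icc.uIcc_subset hzA hζ
    have hcont : ContinuousOn f (uIcc zA ζ) := hfstr.2.1.mono hsub
    have hmem : cc ∈ uIcc (f zA) (f ζ) := by
      rw [Set.mem_uIcc]; exact Or.inr ⟨hfζ.le, hfzA.le⟩
    obtain ⟨ξ, hξ, hfξ⟩ := intermediate_value_uIcc hcont hmem
    have hξIcc : ξ ∈ Icc (-E) (2 * E) := hsub hξ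
    have hptc : (t, ξ, cc) ∈ M.carrier := by
      have h := str_mem_carrier hM hrect ht hfstr hξIcc
      rwa [hfξ] at h
    refine ⟨(t, ξ, cc), hptc, ?_⟩
    have hζη : |zA - ζ| < η := by
      have h1 : dist q.2.1 ζ < η :=
        lt_of_le_of_lt hd1 (lt_of_lt_of_le hdistqr (min_le_left _ _))
      rw [hq2, Real.dist_eq] at h1
      exact h1
    have hxi : |zA - ξ| ≤ |zA - ζ| := by
      rcases le_total zA ζ with hle | hle
      · rw [uIcc_of_le hle] at hξ
        rw [abs_of_nonpos (by linarith [hξ.1]), abs_of_nonpos (by linarith)]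
        linarith [hξ.2]
      · rw [uIcc_of_ge hle] at hξ
        rw [abs_of_nonneg (by linarith [hξ.2]), abs_of_nonneg (by linarith)]
        linarith [hξ.1]
    rw [Prod.dist_eq, Prod.dist_eq]
    simp only [dist_self]
    rw [Real.dist_eq]
    exact max_lt hη (max_lt (lt_of_le_of_lt hxi hζη) hη)

end AuxReach
section AuxMain

open Filter Topology

set_option maxHeartbeats 1000000 in
private lemma mats_main (a b c d ε E : ℝ) (hEdef : E = 2 * (a + b + c) + d)
    (ha : 0 < a) (hb : 0 < b) (hc : 0 < c) (hd : 0 < d) (hε : 0 < ε)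
    (A₁ A₂ : MatData) (hA₁ : IsMat A₁) (hA₂ : IsMat A₂)
    (hdist₁ : matDist A₁ (T3Mat a b c d) ≤ ENNReal.ofReal ε)
    (hdist₂ : matDist A₂ (T3Mat a b c d) ≤ ENNReal.ofReal ε)
    (v₁ v₂ : ℝ × ℝ × ℝ)
    (hv₁ : v₁.1 ∈ Icc (0 : ℝ) 5 ∧ v₁.2.1 ∈ Icc (0 : ℝ) E)
    (hv₂ : v₂.1 ∈ Icc (0 : ℝ) 5 ∧ v₂.2.1 ∈ Icc (0 : ℝ) E)
    (hdisj : Disjoint ((fun p => p - v₁) '' A₁.carrier)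
                      ((fun p => p - v₂) '' A₂.carrier))
    (hx : |v₁.1 - v₂.1| ≤ 4)
    (hzpos : 0 ≤ v₁.2.2 - v₂.2.2)
    (hlt : v₁.2.2 - v₂.2.2 < b + c - 2 * ε) : False := by
  classical
  obtain ⟨hx₁, hy₁⟩ := hv₁
  obtain ⟨hx₂, hy₂⟩ := hv₂
  have hEpos : 0 < E := by rw [hEdef]; linarith
  -- rectangles
  rw [matDist] at hdist₁ hdist₂
  split_ifs at hdist₁ with hcond₁
  swap
  · exact (ENNReal.ofReal_ne_top (top_le_iff.mp hdist₁)).elim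
  split_ifs at hdist₂ with hcond₂
  swap
  · exact (ENNReal.ofReal_ne_top (top_le_iff.mp hdist₂)).elim
  have hcond₁' : Icc A₁.a A₁.b ×ˢ Icc A₁.c A₁.d =
      Icc (0:ℝ) 5 ×ˢ Icc (-(2 * (a + b + c) + d)) (2 * (2 * (a + b + c) + d)) := hcond₁
  have hcond₂' : Icc A₂.a A₂.b ×ˢ Icc A₂.c A₂.d =
      Icc (0:ℝ) 5 ×ˢ Icc (-(2 * (a + b + c) + d)) (2 * (2 * (a + b + c) + d)) := hcond₂
  have hrect₁ : A₁.a = 0 ∧ A₁.b = 5 ∧ A₁.c = -E ∧ A₁.d = 2 * E := by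
    have h := prod_Icc_eq hA₁.1 hA₁.2.1 (by norm_num) (by linarith) hcond₁'
    refine ⟨h.1, h.2.1, ?_, ?_⟩
    · rw [h.2.2.1, hEdef]
    · rw [h.2.2.2, hEdef]
  have hrect₂ : A₂.a = 0 ∧ A₂.b = 5 ∧ A₂.c = -E ∧ A₂.d = 2 * E := by
    have h := prod_Icc_eq hA₂.1 hA₂.2.1 (by norm_num) (by linarith) hcond₂'
    refine ⟨h.1, h.2.1, ?_, ?_⟩
    · rw [h.2.2.1, hEdef]
    · rw [h.2.2.2, hEdef]
  -- numerics
  set Δx := v₁.1 - v₂.1 with hΔx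
  set Δy := v₁.2.1 - v₂.2.1 with hΔy
  set Δz := v₁.2.2 - v₂.2.2 with hΔz
  have hΔxB : -4 ≤ Δx ∧ Δx ≤ 4 := abs_le.mp hx
  have hΔyB : -E ≤ Δy ∧ Δy ≤ E :=
    ⟨by rw [hΔy]; linarith [hy₁.1, hy₂.2], by rw [hΔy]; linarith [hy₁.2, hy₂.1]⟩
  set δ : ℝ := (b + c - 2 * ε - Δz) / 4 with hδdef
  have hδ : 0 < δ := by rw [hδdef]; linarith
  set ε' : ℝ := ε + δ with hε'def
  have hεε' : ε < ε' := by rw [hε'def]; linarith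
  have hε'pos : 0 < ε' := by linarith
  have hkey1 : Δz + 2 * ε' < b + c := by rw [hε'def, hδdef]; linarith
  -- approximation of T³-strings by strings of the two mats
  have approx₁ : ∀ s ∈ Icc (0:ℝ) 5, ∀ S' ∈ T3strings a b c d s,
      ∃ f, StrOf A₁ E s f ∧
        ∀ z ∈ Icc (-E) (2 * E), ∀ q ∈ S', q.2.1 = z → |f z - q.2.2| < ε' := by
    intro s hs S' hS'
    have hs' : s ∈ Icc A₁.a A₁.b := by rw [hrect₁.1, hrect₁.2.1]; exact hs
    have h1 := le_trans (le_iSup₂ (f := fun s (_ : s ∈ Icc A₁.a A₁.b) =>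
      max (⨆ S ∈ A₁.strings s, ⨅ S' ∈ (T3Mat a b c d).strings s, sDist S S')
          (⨆ S' ∈ (T3Mat a b c d).strings s, ⨅ S ∈ A₁.strings s, sDist S S'))
      s hs') hdist₁
    have h2 : (⨆ S' ∈ (T3Mat a b c d).strings s, ⨅ S ∈ A₁.strings s, sDist S S')
        ≤ ENNReal.ofReal ε := le_trans (le_max_right _ _) h1
    have h3 : (⨅ S ∈ A₁.strings s, sDist S S') ≤ ENNReal.ofReal ε :=
      le_trans (le_iSup₂ (f := fun S' (_ : S' ∈ (T3Mat a b c d).strings s) =>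
        ⨅ S ∈ A₁.strings s, sDist S S') S' hS') h2
    have h4 : (⨅ S ∈ A₁.strings s, sDist S S') < ENNReal.ofReal ε' :=
      lt_of_le_of_lt h3 ((ENNReal.ofReal_lt_ofReal_iff hε'pos).mpr hεε')
    rw [iInf_lt_iff] at h4
    obtain ⟨S, h5⟩ := h4
    rw [iInf_lt_iff] at h5
    obtain ⟨hS, hltS⟩ := h5
    obtain ⟨f, hf, hSeq⟩ := exists_str hA₁ hrect₁ hs hS
    refine ⟨f, hf, ?_⟩
    intro z hz q hq hq21
    have hp : (s, z, f z) ∈ S := by rw [hSeq]; exact ⟨z, hz, rfl⟩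
    have hb1 : edist (f z) q.2.2 ≤ sDist S S' := by
      have h6 : edist (f z) q.2.2 ≤
          ⨆ _ : ((s, z, f z) : ℝ × ℝ × ℝ).2.1 = q.2.1,
            edist ((s, z, f z) : ℝ × ℝ × ℝ).2.2 q.2.2 :=
        le_iSup (fun _ => edist ((s, z, f z) : ℝ × ℝ × ℝ).2.2 q.2.2)
          (show ((s, z, f z) : ℝ × ℝ × ℝ).2.1 = q.2.1 from hq21.symm)
      have h7 := le_iSup₂ (f := fun q' (_ : q' ∈ S') =>
        ⨆ _ : ((s, z, f z) : ℝ × ℝ × ℝ).2.1 = q'.2.1,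
          edist ((s, z, f z) : ℝ × ℝ × ℝ).2.2 q'.2.2) q hq
      have h8 := le_iSup₂ (f := fun p (_ : p ∈ S) =>
        ⨆ q' ∈ S', ⨆ _ : p.2.1 = q'.2.1, edist p.2.2 q'.2.2)
        ((s, z, f z) : ℝ × ℝ × ℝ) hp
      exact le_trans (le_trans h6 h7) h8
    have hb2 : dist (f z) q.2.2 < ε' :=
      edist_lt_ofReal.mp (lt_of_le_of_lt hb1 hltS)
    rwa [Real.dist_eq] at hb2
  have approx₂ : ∀ s ∈ Icc (0:ℝ) 5, ∀ S' ∈ T3strings a b c d s,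
      ∃ f, StrOf A₂ E s f ∧
        ∀ z ∈ Icc (-E) (2 * E), ∀ q ∈ S', q.2.1 = z → |f z - q.2.2| < ε' := by
    intro s hs S' hS'
    have hs' : s ∈ Icc A₂.a A₂.b := by rw [hrect₂.1, hrect₂.2.1]; exact hs
    have h1 := le_trans (le_iSup₂ (f := fun s (_ : s ∈ Icc A₂.a A₂.b) =>
      max (⨆ S ∈ A₂.strings s, ⨅ S' ∈ (T3Mat a b c d).strings s, sDist S S')
          (⨆ S' ∈ (T3Mat a b c d).strings s, ⨅ S ∈ A₂.strings s, sDist S S'))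
      s hs') hdist₂
    have h2 : (⨆ S' ∈ (T3Mat a b c d).strings s, ⨅ S ∈ A₂.strings s, sDist S S')
        ≤ ENNReal.ofReal ε := le_trans (le_max_right _ _) h1
    have h3 : (⨅ S ∈ A₂.strings s, sDist S S') ≤ ENNReal.ofReal ε :=
      le_trans (le_iSup₂ (f := fun S' (_ : S' ∈ (T3Mat a b c d).strings s) =>
        ⨅ S ∈ A₂.strings s, sDist S S') S' hS') h2
    have h4 : (⨅ S ∈ A₂.strings s, sDist S S') < ENNReal.ofReal ε' :=
      lt_of_le_of_lt h3 ((ENNReal.ofReal_lt_ofReal_iff hε'pos).mpr hεε')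
    rw [iInf_lt_iff] at h4
    obtain ⟨S, h5⟩ := h4
    rw [iInf_lt_iff] at h5
    obtain ⟨hS, hltS⟩ := h5
    obtain ⟨f, hf, hSeq⟩ := exists_str hA₂ hrect₂ hs hS
    refine ⟨f, hf, ?_⟩
    intro z hz q hq hq21
    have hp : (s, z, f z) ∈ S := by rw [hSeq]; exact ⟨z, hz, rfl⟩
    have hb1 : edist (f z) q.2.2 ≤ sDist S S' := by
      have h6 : edist (f z) q.2.2 ≤
          ⨆ _ : ((s, z, f z) : ℝ × ℝ × ℝ).2.1 = q.2.1,
            edist ((s, z, f z) : ℝ × ℝ × ℝ).2.2 q.2.2 :=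
        le_iSup (fun _ => edist ((s, z, f z) : ℝ × ℝ × ℝ).2.2 q.2.2)
          (show ((s, z, f z) : ℝ × ℝ × ℝ).2.1 = q.2.1 from hq21.symm)
      have h7 := le_iSup₂ (f := fun q' (_ : q' ∈ S') =>
        ⨆ _ : ((s, z, f z) : ℝ × ℝ × ℝ).2.1 = q'.2.1,
          edist ((s, z, f z) : ℝ × ℝ × ℝ).2.2 q'.2.2) q hq
      have h8 := le_iSup₂ (f := fun p (_ : p ∈ S) =>
        ⨆ q' ∈ S', ⨆ _ : p.2.1 = q'.2.1, edist p.2.2 q'.2.2)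
        ((s, z, f z) : ℝ × ℝ × ℝ) hp
      exact le_trans (le_trans h6 h7) h8
    have hb2 : dist (f z) q.2.2 < ε' :=
      edist_lt_ofReal.mp (lt_of_le_of_lt hb1 hltS)
    rwa [Real.dist_eq] at hb2
  -- no string crossing (from disjointness)
  have nocross : ∀ s, s ∈ Icc (0:ℝ) 5 → s - Δx ∈ Icc (0:ℝ) 5 →
      ∀ f g, StrOf A₁ E s f → StrOf A₂ E (s - Δx) g →
      ∀ z, z ∈ Icc (-E) (2 * E) → z - Δy ∈ Icc (-E) (2 * E) →
      f z - g (z - Δy) ≠ Δz := by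
    intro s hs hs' f g hf hg z hz hz' hEq
    have hp1 : (s, z, f z) ∈ A₁.carrier := str_mem_carrier hA₁ hrect₁ hs hf hz
    have hp2 : (s - Δx, z - Δy, g (z - Δy)) ∈ A₂.carrier :=
      str_mem_carrier hA₂ hrect₂ hs' hg hz'
    refine Set.disjoint_left.mp hdisj ⟨_, hp1, rfl⟩ ⟨_, hp2, ?_⟩
    refine Prod.ext ?_ (Prod.ext ?_ ?_)
    · show s - Δx - v₂.1 = s - v₁.1
      rw [hΔx]; ring
    · show z - Δy - v₂.2.1 = z - v₁.2.1
      rw [hΔy]; ring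
    · show g (z - Δy) - v₂.2.2 = f z - v₁.2.2
      rw [hΔz] at hEq
      linarith
  -- domain facts along uIcc
  have domsub : ∀ x y : ℝ, x ∈ Icc (-E) (2 * E) → x - Δy ∈ Icc (-E) (2 * E) →
      y ∈ Icc (-E) (2 * E) → y - Δy ∈ Icc (-E) (2 * E) →
      ∀ t ∈ uIcc x y, t ∈ Icc (-E) (2 * E) ∧ t - Δy ∈ Icc (-E) (2 * E) := by
    intro x y hx1 hx2 hy1 hy2 t ht
    rcases le_total x y with hle | hle
    · rw [uIcc_of_le hle] at ht
      exact ⟨⟨by linarith [ht.1, hx1.1], by linarith [ht.2, hy1.2]⟩,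
             ⟨by linarith [ht.1, hx2.1], by linarith [ht.2, hy2.2]⟩⟩
    · rw [uIcc_of_ge hle] at ht
      exact ⟨⟨by linarith [ht.1, hy1.1], by linarith [ht.2, hx1.2]⟩,
             ⟨by linarith [ht.1, hy2.1], by linarith [ht.2, hx2.2]⟩⟩
  -- transfer of the sign of f - g(· - Δy) - Δz
  have transfer : ∀ s, s ∈ Icc (0:ℝ) 5 → s - Δx ∈ Icc (0:ℝ) 5 →
      ∀ f g, StrOf A₁ E s f → StrOf A₂ E (s - Δx) g →
      ∀ x y, x ∈ Icc (-E) (2 * E) → x - Δy ∈ Icc (-E) (2 * E) →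
        y ∈ Icc (-E) (2 * E) → y - Δy ∈ Icc (-E) (2 * E) →
        Δz < f x - g (x - Δy) → Δz < f y - g (y - Δy) := by
    intro s hs hs' f g hf hg x y hx1 hx2 hy1 hy2 hlt'
    by_contra hcon
    push_neg at hcon
    have hne := nocross s hs hs' f g hf hg y hy1 hy2
    have hcon' : f y - g (y - Δy) < Δz := lt_of_le_of_ne hcon hne
    have hsub1 : uIcc x y ⊆ Icc (-E) (2 * E) :=
      fun t ht => (domsub x y hx1 hx2 hy1 hy2 t ht).1
    have hGcont : ContinuousOn (fun z => f z - g (z - Δy)) (uIcc x y) := by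
      apply ContinuousOn.sub
      · exact hf.2.1.mono hsub1
      · apply ContinuousOn.comp hg.2.1
          ((continuous_id.sub continuous_const).continuousOn)
        intro t ht
        exact (domsub x y hx1 hx2 hy1 hy2 t ht).2
    have hmem : Δz ∈ uIcc (f x - g (x - Δy)) (f y - g (y - Δy)) := by
      rw [Set.mem_uIcc]
      exact Or.inr ⟨hcon'.le, hlt'.le⟩
    obtain ⟨τ, hτ, hGτ⟩ := intermediate_value_uIcc hGcont hmem
    have h1 := domsub x y hx1 hx2 hy1 hy2 τ hτ
    exact nocross s hs hs' f g hf hg τ h1.1 h1.2 hGτ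
  have transfer' : ∀ s, s ∈ Icc (0:ℝ) 5 → s - Δx ∈ Icc (0:ℝ) 5 →
      ∀ f g, StrOf A₁ E s f → StrOf A₂ E (s - Δx) g →
      ∀ x y, x ∈ Icc (-E) (2 * E) → x - Δy ∈ Icc (-E) (2 * E) →
        y ∈ Icc (-E) (2 * E) → y - Δy ∈ Icc (-E) (2 * E) →
        f x - g (x - Δy) < Δz → f y - g (y - Δy) < Δz := by
    intro s hs hs' f g hf hg x y hx1 hx2 hy1 hy2 hlt'
    by_contra hcon
    push_neg at hcon
    have hne := nocross s hs hs' f g hf hg y hy1 hy2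
    have h1 : Δz < f y - g (y - Δy) := lt_of_le_of_ne hcon (Ne.symm hne)
    have h2 := transfer s hs hs' f g hf hg y x hy1 hy2 hx1 hx2 h1
    linarith
  -- orientation-dependent anchors
  obtain ⟨zA, zB, β₁, β₂, hzA1, hzA2, hzB1, hzB2, hanch1, hanch2, zm, hzm1, hzm2, hzmor⟩ :
      ∃ zA zB β₁ β₂,
        zA ∈ Icc (-E) (2 * E) ∧ zA - Δy ∈ Icc (-E) (2 * E) ∧
        zB ∈ Icc (-E) (2 * E) ∧ zB - Δy ∈ Icc (-E) (2 * E) ∧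
        (∀ s f, StrOf A₁ E s f → f zB = β₁) ∧
        (∀ s g, StrOf A₂ E s g → g (zA - Δy) = β₂) ∧
        ∃ zm, zm ∈ Icc (-E) (2 * E) ∧ zm - Δy ∈ Icc (-E) (2 * E) ∧
          (zm - Δy = a + (b + c) - E ∨ zm - Δy = a + (b + c) + E) := by
    have haHE : a + (b + c) ≤ E := by rw [hEdef]; linarith
    have haH0 : 0 < a + (b + c) := by linarith
    rcases le_total 0 Δy with hy0 | hy0
    · refine ⟨-E + Δy, 2 * E, A₁.y0, A₂.x0,
        ⟨by linarith, by linarith [hΔyB.2]⟩,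
        ⟨by linarith, by linarith⟩,
        ⟨by linarith, le_refl _⟩,
        ⟨by linarith [hΔyB.2], by linarith⟩,
        fun s f hf => hf.2.2.2, ?_,
        Δy + (a + (b + c) - E),
        ⟨by linarith, by linarith [hΔyB.2]⟩,
        ⟨by linarith, by linarith⟩,
        Or.inl (by ring)⟩
      intro s g hg
      have he : -E + Δy - Δy = -E := by ring
      rw [he]
      exact hg.2.2.1
    · refine ⟨2 * E + Δy, -E, A₁.x0, A₂.y0,
        ⟨by linarith [hΔyB.1], by linarith⟩,
        ⟨by linarith, by linarith⟩,
        ⟨le_refl _, by linarith⟩,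
        ⟨by linarith, by linarith [hΔyB.1]⟩,
        fun s f hf => hf.2.2.1, ?_,
        Δy + (a + (b + c) + E),
        ⟨by linarith [hΔyB.1], by linarith⟩,
        ⟨by linarith, by linarith⟩,
        Or.inr (by ring)⟩
      intro s g hg
      have he : 2 * E + Δy - Δy = 2 * E := by ring
      rw [he]
      exact hg.2.2.2
  -- the forbidden point
  have key : ∀ s, s ∈ Icc (0:ℝ) 5 → s - Δx ∈ Icc (0:ℝ) 5 →
      (s, zA, β₂ + Δz) ∉ A₁.carrier := by
    intro s hs hs' hmem
    obtain ⟨g, hg⟩ := exists_str' hA₂ hrect₂ hs'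
    have hp2 : (s - Δx, zA - Δy, g (zA - Δy)) ∈ A₂.carrier :=
      str_mem_carrier hA₂ hrect₂ hs' hg hzA2
    refine Set.disjoint_left.mp hdisj ⟨_, hmem, rfl⟩ ⟨_, hp2, ?_⟩
    refine Prod.ext ?_ (Prod.ext ?_ ?_)
    · show s - Δx - v₂.1 = s - v₁.1
      rw [hΔx]; ring
    · show zA - Δy - v₂.2.1 = zA - v₁.2.1
      rw [hΔy]; ring
    · show g (zA - Δy) - v₂.2.2 = β₂ + Δz - v₁.2.2
      rw [hanch2 _ g hg, hΔz]; ring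
  -- dichotomy
  have dich : ∀ s, s ∈ Icc (0:ℝ) 5 → s - Δx ∈ Icc (0:ℝ) 5 →
      (∀ f, StrOf A₁ E s f → β₂ + Δz < f zA) ∨
      (∀ f, StrOf A₁ E s f → f zA < β₂ + Δz) := by
    intro s hs hs'
    obtain ⟨g, hg⟩ := exists_str' hA₂ hrect₂ hs'
    obtain ⟨f₀, hf₀⟩ := exists_str' hA₁ hrect₁ hs
    have hβ : g (zA - Δy) = β₂ := hanch2 _ g hg
    have hne₀ : f₀ zA - g (zA - Δy) ≠ Δz := nocross s hs hs' f₀ g hf₀ hg zA hzA1 hzA2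
    rcases lt_trichotomy (f₀ zA) (β₂ + Δz) with h0 | h0 | h0
    · right
      intro f hf
      by_contra hcon
      push_neg at hcon
      have hfne : f zA - g (zA - Δy) ≠ Δz := nocross s hs hs' f g hf hg zA hzA1 hzA2
      have h1 : Δz < f zA - g (zA - Δy) := by
        rw [hβ] at hfne ⊢
        rcases eq_or_lt_of_le hcon with he | hl
        · exact absurd (by rw [← he]; ring) hfne
        · linarith
      have h2 := transfer s hs hs' f g hf hg zA zB hzA1 hzA2 hzB1 hzB2 h1
      have h3 : f₀ zA - g (zA - Δy) < Δz := by rw [hβ]; linarith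
      have h4 := transfer' s hs hs' f₀ g hf₀ hg zA zB hzA1 hzA2 hzB1 hzB2 h3
      rw [hanch1 s f hf] at h2
      rw [hanch1 s f₀ hf₀] at h4
      linarith
    · exact absurd (by rw [hβ, h0]; ring) hne₀
    · left
      intro f hf
      by_contra hcon
      push_neg at hcon
      have hfne : f zA - g (zA - Δy) ≠ Δz := nocross s hs hs' f g hf hg zA hzA1 hzA2
      have h1 : f zA - g (zA - Δy) < Δz := by
        rw [hβ] at hfne ⊢
        rcases eq_or_lt_of_le hcon with he | hl
        · exact absurd (by rw [he]; ring) hfne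
        · linarith
      have h2 := transfer' s hs hs' f g hf hg zA zB hzA1 hzA2 hzB1 hzB2 h1
      have h3 : Δz < f₀ zA - g (zA - Δy) := by rw [hβ]; linarith
      have h4 := transfer s hs hs' f₀ g hf₀ hg zA zB hzA1 hzA2 hzB1 hzB2 h3
      rw [hanch1 s f hf] at h2
      rw [hanch1 s f₀ hf₀] at h4
      linarith
  -- selection of parameters
  have memU1 : ∀ {s : ℝ}, s ∈ Icc (1:ℝ) 2 ∪ Icc (3:ℝ) 4 → s ∈ Icc (0:ℝ) 5 := by
    rintro s (h | h) <;> exact ⟨by linarith [h.1], by linarith [h.2]⟩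
  have memU2 : ∀ {s : ℝ}, s ∈ Icc (0:ℝ) 1 ∪ Icc (4:ℝ) 5 → s ∈ Icc (0:ℝ) 5 := by
    rintro s (h | h) <;> exact ⟨by linarith [h.1], by linarith [h.2]⟩
  have sel₁ : ∃ s, (s ∈ Icc (1:ℝ) 2 ∪ Icc (3:ℝ) 4) ∧
      (s - Δx ∈ Icc (0:ℝ) 1 ∪ Icc (4:ℝ) 5) := by
    obtain ⟨hl, hr⟩ := hΔxB
    rcases le_total Δx 0 with h0 | h0
    · rcases le_total Δx (-2) with h1 | h1
      · rcases le_total Δx (-3) with h2 | h2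
        · exact ⟨Δx + 5, Or.inl ⟨by linarith, by linarith⟩,
            Or.inr ⟨by linarith, by linarith⟩⟩
        · exact ⟨Δx + 4, Or.inl ⟨by linarith, by linarith⟩,
            Or.inr ⟨by linarith, by linarith⟩⟩
      · rcases le_total Δx (-1) with h2 | h2
        · exact ⟨Δx + 5, Or.inr ⟨by linarith, by linarith⟩,
            Or.inr ⟨by linarith, by linarith⟩⟩
        · exact ⟨Δx + 4, Or.inr ⟨by linarith, by linarith⟩,
            Or.inr ⟨by linarith, by linarith⟩⟩
    · rcases le_total Δx 2 with h1 | h1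
      · rcases le_total Δx 1 with h2 | h2
        · exact ⟨Δx + 1, Or.inl ⟨by linarith, by linarith⟩,
            Or.inl ⟨by linarith, by linarith⟩⟩
        · exact ⟨Δx, Or.inl ⟨by linarith, by linarith⟩,
            Or.inl ⟨by linarith, by linarith⟩⟩
      · rcases le_total Δx 3 with h2 | h2
        · exact ⟨Δx + 1, Or.inr ⟨by linarith, by linarith⟩,
            Or.inl ⟨by linarith, by linarith⟩⟩
        · exact ⟨Δx, Or.inr ⟨by linarith, by linarith⟩,
            Or.inl ⟨by linarith, by linarith⟩⟩
  have sel₂ : ∃ s, (s ∈ Icc (0:ℝ) 1 ∪ Icc (4:ℝ) 5) ∧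
      (s - Δx ∈ Icc (1:ℝ) 2 ∪ Icc (3:ℝ) 4) := by
    obtain ⟨hl, hr⟩ := hΔxB
    rcases le_total Δx 0 with h0 | h0
    · rcases le_total Δx (-2) with h1 | h1
      · rcases le_total Δx (-3) with h2 | h2
        · exact ⟨0, Or.inl ⟨by linarith, by linarith⟩,
            Or.inr ⟨by linarith, by linarith⟩⟩
        · exact ⟨1, Or.inl ⟨by linarith, by linarith⟩,
            Or.inr ⟨by linarith, by linarith⟩⟩
      · rcases le_total Δx (-1) with h2 | h2
        · exact ⟨0, Or.inl ⟨by linarith, by linarith⟩,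
            Or.inl ⟨by linarith, by linarith⟩⟩
        · exact ⟨1, Or.inl ⟨by linarith, by linarith⟩,
            Or.inl ⟨by linarith, by linarith⟩⟩
    · rcases le_total Δx 2 with h1 | h1
      · rcases le_total Δx 1 with h2 | h2
        · exact ⟨4, Or.inr ⟨by linarith, by linarith⟩,
            Or.inr ⟨by linarith, by linarith⟩⟩
        · exact ⟨5, Or.inr ⟨by linarith, by linarith⟩,
            Or.inr ⟨by linarith, by linarith⟩⟩
      · rcases le_total Δx 3 with h2 | h2
        · exact ⟨4, Or.inr ⟨by linarith, by linarith⟩,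
            Or.inl ⟨by linarith, by linarith⟩⟩
        · exact ⟨5, Or.inr ⟨by linarith, by linarith⟩,
            Or.inl ⟨by linarith, by linarith⟩⟩
  -- plateau point facts
  have haHE : a + (b + c) ≤ E := by rw [hEdef]; linarith
  have hzp1 : a + (b + c) ∈ Icc (-E) (2 * E) := ⟨by linarith, by linarith⟩
  have hzp2 : a + (b + c) - Δy ∈ Icc (-E) (2 * E) :=
    ⟨by linarith [hΔyB.2], by linarith [hΔyB.1]⟩
  -- s_a with all its strings above the anchor
  obtain ⟨sa, hsaU, hsaF⟩ := sel₁
  have hsa5 : sa ∈ Icc (0:ℝ) 5 := memU1 hsaU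
  have hsa5' : sa - Δx ∈ Icc (0:ℝ) 5 := memU2 hsaF
  obtain ⟨f₁, hf₁, hf₁pt⟩ := approx₁ sa hsa5 _ (triple3_mem_up hsaU)
  obtain ⟨g₁, hg₁, hg₁pt⟩ := approx₂ (sa - Δx) hsa5' _ (triple3_mem_flat hsaF)
  have hv1 : |f₁ (a + (b + c)) - (b + c)| < ε' := by
    have hq := triple3_pt_mid (a := a) (b := b) (c := c) (d := d) (s := sa)
      (f := fUp a b c d) (w := a + (b + c)) ⟨by linarith, by linarith [hEdef]⟩
    rw [fUp_peak a b c d hb.le hc.le hd.le] at hq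
    exact hf₁pt _ hzp1 _ hq rfl
  have hv2 : |g₁ (a + (b + c) - Δy) - 0| < ε' := by
    have hq := flat3_pt (a := a) (b := b) (c := c) (d := d) (s := sa - Δx)
      (w := a + (b + c) - Δy) (by linarith [hEdef])
      ⟨by linarith [hzp2.1, hEdef], by linarith [hzp2.2, hEdef]⟩
    exact hg₁pt _ hzp2 _ hq rfl
  have hstep : Δz < f₁ (a + (b + c)) - g₁ (a + (b + c) - Δy) := by
    have h1 := abs_lt.mp hv1
    have h2 := abs_lt.mp hv2
    linarith [hkey1]
  have hUa : ∀ f, StrOf A₁ E sa f → β₂ + Δz < f zA := by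
    have h1 := transfer sa hsa5 hsa5' f₁ g₁ hf₁ hg₁ (a + (b + c)) zA
      hzp1 hzp2 hzA1 hzA2 hstep
    rw [hanch2 _ g₁ hg₁] at h1
    rcases dich sa hsa5 hsa5' with hD | hD
    · exact hD
    · exact absurd (hD f₁ hf₁) (by linarith)
  -- s_b with all its strings below the anchor
  obtain ⟨sb, hsbF, hsbU⟩ := sel₂
  have hsb5 : sb ∈ Icc (0:ℝ) 5 := memU2 hsbF
  have hsb5' : sb - Δx ∈ Icc (0:ℝ) 5 := memU1 hsbU
  obtain ⟨f₂, hf₂, hf₂pt⟩ := approx₁ sb hsb5 _ (triple3_mem_flat hsbF)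
  obtain ⟨g₂, hg₂, hg₂pt⟩ := approx₂ (sb - Δx) hsb5' _ (triple3_mem_up hsbU)
  have hv3 : |f₂ zm - 0| < ε' := by
    have hq := flat3_pt (a := a) (b := b) (c := c) (d := d) (s := sb)
      (w := zm) (by linarith [hEdef])
      ⟨by linarith [hzm1.1, hEdef], by linarith [hzm1.2, hEdef]⟩
    exact hf₂pt _ hzm1 _ hq rfl
  have hv4 : |g₂ (zm - Δy) - (b + c)| < ε' := by
    rcases hzmor with hor | hor
    · have hq := triple3_pt_left (a := a) (b := b) (c := c) (d := d) (s := sb - Δx)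
        (f := fUp a b c d) (w := a + (b + c)) ⟨by linarith, by linarith [hEdef]⟩
      rw [fUp_peak a b c d hb.le hc.le hd.le] at hq
      refine hg₂pt _ hzm2 _ hq ?_
      show a + (b + c) - (2 * (a + b + c) + d) = zm - Δy
      rw [hor, hEdef]
    · have hq := triple3_pt_right (a := a) (b := b) (c := c) (d := d) (s := sb - Δx)
        (f := fUp a b c d) (w := a + (b + c)) ⟨by linarith, by linarith [hEdef]⟩
      rw [fUp_peak a b c d hb.le hc.le hd.le] at hq
      refine hg₂pt _ hzm2 _ hq ?_
      show a + (b + c) + (2 * (a + b + c) + d) = zm - Δy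
      rw [hor, hEdef]
  have hstep2 : f₂ zm - g₂ (zm - Δy) < Δz := by
    have h1 := abs_lt.mp hv3
    have h2 := abs_lt.mp hv4
    linarith [hkey1, hzpos]
  have hVb : ∀ f, StrOf A₁ E sb f → f zA < β₂ + Δz := by
    have h1 := transfer' sb hsb5 hsb5' f₂ g₂ hf₂ hg₂ zm zA
      hzm1 hzm2 hzA1 hzA2 hstep2
    rw [hanch2 _ g₂ hg₂] at h1
    rcases dich sb hsb5 hsb5' with hD | hD
    · exact absurd (hD f₂ hf₂) (by linarith)
    · exact hD
  -- a tendsto helper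
  have htend0 : Tendsto (fun n : ℕ => 1 / ((n : ℝ) + 1)) atTop (nhds 0) :=
    tendsto_one_div_add_atTop_nhds_zero_nat
  -- final connectedness argument
  rcases le_total sa sb with hab | hab
  · set T : Set ℝ :=
      {s | s ∈ Icc sa sb ∧ ∀ f, StrOf A₁ E s f → β₂ + Δz < f zA} with hTdef
    have hsaT : sa ∈ T := ⟨⟨le_refl sa, hab⟩, hUa⟩
    have hTne : T.Nonempty := ⟨sa, hsaT⟩
    have hTbdd : BddAbove T := ⟨sb, fun s hs => hs.1.2⟩
    set t := sSup T with htdef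
    have htlo : sa ≤ t := le_csSup hTbdd hsaT
    have hthi : t ≤ sb := csSup_le hTne (fun s hs => hs.1.2)
    have ht5 : t ∈ Icc (0:ℝ) 5 := ⟨by linarith [hsa5.1], by linarith [hsb5.2]⟩
    have ht5' : t - Δx ∈ Icc (0:ℝ) 5 := ⟨by linarith [hsa5'.1], by linarith [hsb5'.2]⟩
    have hseq : ∀ n : ℕ, ∃ u, u ∈ T ∧ t - 1 / ((n : ℝ) + 1) < u := by
      intro n
      have hpos : (0:ℝ) < 1 / ((n : ℝ) + 1) := by positivity
      exact exists_lt_of_lt_csSup hTne (by linarith)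
    choose u hu hul using hseq
    have hule : ∀ n, u n ≤ t := fun n => le_csSup hTbdd (hu n)
    have hutend : Tendsto u atTop (nhds t) := by
      have h1 : Tendsto (fun n : ℕ => t - 1 / ((n : ℝ) + 1)) atTop (nhds t) := by
        have h2 := (tendsto_const_nhds (x := t) (f := atTop (α := ℕ))).sub htend0
        simpa using h2
      exact tendsto_of_tendsto_of_tendsto_of_le_of_le h1 tendsto_const_nhds
        (fun n => (hul n).le) hule
    have huI : ∀ n, u n ∈ Icc (0:ℝ) 5 :=
      fun n => ⟨by linarith [(hu n).1.1, hsa5.1], by linarith [(hu n).1.2, hsb5.2]⟩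
    rcases dich t ht5 ht5' with hDt | hDt
    · -- t on the high side: approach from the right inside the low side
      have htb : t < sb := by
        rcases eq_or_lt_of_le hthi with he | hl
        · exfalso
          obtain ⟨f, hf⟩ := exists_str' hA₁ hrect₁ ht5
          have h1 := hDt f hf
          have hf' : StrOf A₁ E sb f := by rw [← he]; exact hf
          have h2 := hVb f hf'
          linarith
        · exact hl
      set v : ℕ → ℝ := fun n => min sb (t + 1 / ((n : ℝ) + 1)) with hvdef
      have hvI : ∀ n, t < v n ∧ v n ≤ sb := by
        intro n
        have hpos : (0:ℝ) < 1 / ((n : ℝ) + 1) := by positivity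
        exact ⟨lt_min htb (by linarith), min_le_left _ _⟩
      have hv5 : ∀ n, v n ∈ Icc (0:ℝ) 5 :=
        fun n => ⟨by linarith [(hvI n).1, hsa5.1, htlo], by linarith [(hvI n).2, hsb5.2]⟩
      have hv5' : ∀ n, v n - Δx ∈ Icc (0:ℝ) 5 :=
        fun n => ⟨by linarith [(hvI n).1, hsa5'.1, htlo], by linarith [(hvI n).2, hsb5'.2]⟩
      have hvV : ∀ n, ∀ f, StrOf A₁ E (v n) f → f zA < β₂ + Δz := by
        intro n
        rcases dich (v n) (hv5 n) (hv5' n) with hD | hD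
        · exfalso
          have hmemT : v n ∈ T := ⟨⟨by linarith [(hvI n).1, htlo], (hvI n).2⟩, hD⟩
          have := le_csSup hTbdd hmemT
          linarith [(hvI n).1]
        · exact hD
      have hvt : Tendsto v atTop (nhds t) := by
        have h1 : Tendsto (fun n : ℕ => t + 1 / ((n : ℝ) + 1)) atTop (nhds t) := by
          have h2 := (tendsto_const_nhds (x := t) (f := atTop (α := ℕ))).add htend0
          simpa using h2
        exact tendsto_of_tendsto_of_tendsto_of_le_of_le tendsto_const_nhds h1
          (fun n => ((hvI n).1).le) (fun n => min_le_right _ _)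
      choose fs hfs using (fun n => exists_str' hA₁ hrect₁ (hv5 n))
      exact key t ht5 ht5' (reach_lemma' hA₁ hrect₁ hzA1 ht5 hv5 hvt hfs
        (fun n => (hvV n (fs n) (hfs n)).le) hDt)
    · -- t on the low side: use the u-sequence from the high side
      choose fs hfs using (fun n => exists_str' hA₁ hrect₁ (huI n))
      exact key t ht5 ht5' (reach_lemma hA₁ hrect₁ hzA1 ht5 huI hutend hfs
        (fun n => ((hu n).2 (fs n) (hfs n)).le) hDt)
  · -- mirror: sb ≤ sa
    set T : Set ℝ :=
      {s | s ∈ Icc sb sa ∧ ∀ f, StrOf A₁ E s f → f zA < β₂ + Δz} with hTdef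
    have hsbT : sb ∈ T := ⟨⟨le_refl sb, hab⟩, hVb⟩
    have hTne : T.Nonempty := ⟨sb, hsbT⟩
    have hTbdd : BddAbove T := ⟨sa, fun s hs => hs.1.2⟩
    set t := sSup T with htdef
    have htlo : sb ≤ t := le_csSup hTbdd hsbT
    have hthi : t ≤ sa := csSup_le hTne (fun s hs => hs.1.2)
    have ht5 : t ∈ Icc (0:ℝ) 5 := ⟨by linarith [hsb5.1], by linarith [hsa5.2]⟩
    have ht5' : t - Δx ∈ Icc (0:ℝ) 5 := ⟨by linarith [hsb5'.1], by linarith [hsa5'.2]⟩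
    have hseq : ∀ n : ℕ, ∃ u, u ∈ T ∧ t - 1 / ((n : ℝ) + 1) < u := by
      intro n
      have hpos : (0:ℝ) < 1 / ((n : ℝ) + 1) := by positivity
      exact exists_lt_of_lt_csSup hTne (by linarith)
    choose u hu hul using hseq
    have hule : ∀ n, u n ≤ t := fun n => le_csSup hTbdd (hu n)
    have hutend : Tendsto u atTop (nhds t) := by
      have h1 : Tendsto (fun n : ℕ => t - 1 / ((n : ℝ) + 1)) atTop (nhds t) := by
        have h2 := (tendsto_const_nhds (x := t) (f := atTop (α := ℕ))).sub htend0
        simpa using h2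
      exact tendsto_of_tendsto_of_tendsto_of_le_of_le h1 tendsto_const_nhds
        (fun n => (hul n).le) hule
    have huI : ∀ n, u n ∈ Icc (0:ℝ) 5 :=
      fun n => ⟨by linarith [(hu n).1.1, hsb5.1], by linarith [(hu n).1.2, hsa5.2]⟩
    rcases dich t ht5 ht5' with hDt | hDt
    · -- t on the high side: use the u-sequence from the low side
      choose fs hfs using (fun n => exists_str' hA₁ hrect₁ (huI n))
      exact key t ht5 ht5' (reach_lemma' hA₁ hrect₁ hzA1 ht5 huI hutend hfs
        (fun n => ((hu n).2 (fs n) (hfs n)).le) hDt)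
    · -- t on the low side: approach from the right inside the high side
      have htb : t < sa := by
        rcases eq_or_lt_of_le hthi with he | hl
        · exfalso
          obtain ⟨f, hf⟩ := exists_str' hA₁ hrect₁ ht5
          have h1 := hDt f hf
          have hf' : StrOf A₁ E sa f := by rw [← he]; exact hf
          have h2 := hUa f hf'
          linarith
        · exact hl
      set v : ℕ → ℝ := fun n => min sa (t + 1 / ((n : ℝ) + 1)) with hvdef
      have hvI : ∀ n, t < v n ∧ v n ≤ sa := by
        intro n
        have hpos : (0:ℝ) < 1 / ((n : ℝ) + 1) := by positivity
        exact ⟨lt_min htb (by linarith), min_le_left _ _⟩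
      have hv5 : ∀ n, v n ∈ Icc (0:ℝ) 5 :=
        fun n => ⟨by linarith [(hvI n).1, hsb5.1, htlo], by linarith [(hvI n).2, hsa5.2]⟩
      have hv5' : ∀ n, v n - Δx ∈ Icc (0:ℝ) 5 :=
        fun n => ⟨by linarith [(hvI n).1, hsb5'.1, htlo], by linarith [(hvI n).2, hsa5'.2]⟩
      have hvU : ∀ n, ∀ f, StrOf A₁ E (v n) f → β₂ + Δz < f zA := by
        intro n
        rcases dich (v n) (hv5 n) (hv5' n) with hD | hD
        · exact hD
        · exfalso
          have hmemT : v n ∈ T := ⟨⟨by linarith [(hvI n).1, htlo], (hvI n).2⟩, hD⟩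
          have := le_csSup hTbdd hmemT
          linarith [(hvI n).1]
      have hvt : Tendsto v atTop (nhds t) := by
        have h1 : Tendsto (fun n : ℕ => t + 1 / ((n : ℝ) + 1)) atTop (nhds t) := by
          have h2 := (tendsto_const_nhds (x := t) (f := atTop (α := ℕ))).add htend0
          simpa using h2
        exact tendsto_of_tendsto_of_tendsto_of_le_of_le tendsto_const_nhds h1
          (fun n => ((hvI n).1).le) (fun n => min_le_right _ _)
      choose fs hfs using (fun n => exists_str' hA₁ hrect₁ (hv5 n))
      exact key t ht5 ht5' (reach_lemma hA₁ hrect₁ hzA1 ht5 hv5 hvt hfs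
        (fun n => (hvU n (fs n) (hfs n)).le) hDt)

end AuxMain
/-- Claim on horizontally overlapping translates of perturbations of `T³`:
if `A₁, A₂` are mats within mat-distance `ε` of `T³`, the translates
`A₁ − v₁` and `A₂ − v₂` (with `v₁, v₂ ∈ [0,5] × [0,e] × ℝ`) are disjoint, and
`|x₁ − x₂| ≤ 4`, then `|z₁ − z₂| ≥ h − 2ε` where `h = b + c`. -/
theorem statement14 (a b c d : ℝ) (ha : 0 < a) (hb : 0 < b) (hc : 0 < c)
    (hd : 0 < d) (ε : ℝ) (hε : 0 < ε)
    (hεbc : ε < min (b / 7) (c / 8))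
    (hde : d ≥ 2 * (2 * (a + b + c) + d) / 3)
    (A₁ A₂ : MatData) (hA₁ : IsMat A₁) (hA₂ : IsMat A₂)
    (hdist₁ : matDist A₁ (T3Mat a b c d) ≤ ENNReal.ofReal ε)
    (hdist₂ : matDist A₂ (T3Mat a b c d) ≤ ENNReal.ofReal ε)
    (v₁ v₂ : ℝ × ℝ × ℝ)
    (hv₁ : v₁.1 ∈ Icc (0 : ℝ) 5 ∧ v₁.2.1 ∈ Icc (0 : ℝ) (2 * (a + b + c) + d))
    (hv₂ : v₂.1 ∈ Icc (0 : ℝ) 5 ∧ v₂.2.1 ∈ Icc (0 : ℝ) (2 * (a + b + c) + d))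
    (hdisj : Disjoint ((fun p => p - v₁) '' A₁.carrier)
                      ((fun p => p - v₂) '' A₂.carrier))
    (hx : |v₁.1 - v₂.1| ≤ 4) :
    b + c - 2 * ε ≤ |v₁.2.2 - v₂.2.2| := by
  rcases le_or_gt (b + c - 2 * ε) 0 with h0 | h0
  · exact le_trans h0 (abs_nonneg _)
  by_contra hcon
  push_neg at hcon
  rcases le_total v₂.2.2 v₁.2.2 with hz | hz
  · have h1 : 0 ≤ v₁.2.2 - v₂.2.2 := by linarith
    have h2 : v₁.2.2 - v₂.2.2 < b + c - 2 * ε := by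
      rwa [abs_of_nonneg h1] at hcon
    exact mats_main a b c d ε (2 * (a + b + c) + d) rfl ha hb hc hd hε A₁ A₂ hA₁ hA₂
      hdist₁ hdist₂ v₁ v₂ hv₁ hv₂ hdisj hx h1 h2
  · have h1 : 0 ≤ v₂.2.2 - v₁.2.2 := by linarith
    have h2 : v₂.2.2 - v₁.2.2 < b + c - 2 * ε := by
      rw [abs_sub_comm] at hcon
      rwa [abs_of_nonneg h1] at hcon
    exact mats_main a b c d ε (2 * (a + b + c) + d) rfl ha hb hc hd hε A₂ A₁ hA₂ hA₁
      hdist₂ hdist₁ v₂ v₁ hv₂ hv₁ hdisj.symm (by rw [abs_sub_comm]; exact hx) h1 h2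
end

section
/- Let A be a finite alphabet with zero symbol, r ∈ ℕ, and X ⊆ A^{ℤ³} a subshift. Then the r-zero-gluing closure of X equals the set of all x ∈ A^{ℤ³} such that every r-connected component configuration of x is an r-connected component configuration of some element of X. -/
/-!
A configuration all of whose component configurations are component configurations of points of
`X` lies in every `r`-zero-gluing set containing `X`, so it suffices to show that the set `C` of
such configurations is an `r`-zero-gluing subshift. Gluing holds because a component configuration
is its own unique component configuration; shift invariance is inherited from `X`.

For closedness: when `y` is connected, "`y` is a component configuration of `x'`" is a family of
conditions on single coordinates of `x'` (`x'` agrees with `y` on `supp y` and vanishes on its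
`r`-neighbourhood). As `r`-reachability depends on finitely many coordinates only, every finite
subfamily is met by a point of `X` when `y` comes from a limit `x` of points of `C`, and compactness
of `X` yields a point of `X` meeting all of them.
-/

open Set Relation

section ComponentConfiguration

variable {A : Type} {z : A} {r : ℕ}

lemma dinf_comm (u w : V3) : dinf u w = dinf w u := by
  simp only [dinf, abs_sub_comm]

lemma reach_symm {x : V3 → A} {a b : V3} (h : Reach z r x a b) : Reach z r x b a := by
  refine reflTransGen_swap.mp (ReflTransGen.mono (fun p q hpq => ?_) _ _ h)
  exact ⟨hpq.2.1, hpq.1, dinf_comm p q ▸ hpq.2.2⟩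

open Classical in
/-- Off the support of `x` both branches give `z`, so unlike `IsCompConf` the condition only
mentions reachability. -/
noncomputable def compConf (z : A) (r : ℕ) (x : V3 → A) (v : V3) : V3 → A :=
  fun u => if Reach z r x v u then x u else z

lemma isCompConf_iff {x y : V3 → A} :
    IsCompConf z r x y ↔ ∃ v, x v ≠ z ∧ y = compConf z r x v := by
  constructor
  · rintro ⟨v, hv, h_comp, h_out⟩
    refine ⟨v, hv, funext fun u => ?_⟩
    by_cases hu : Reach z r x v u
    · rw [compConf, if_pos hu]
      by_cases hxu : x u = z
      · rw [hxu]; exact h_out u fun h => h.1 hxu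
      · exact h_comp u ⟨hxu, hu⟩
    · rw [compConf, if_neg hu]; exact h_out u fun h => hu h.2
  · rintro ⟨v, hv, rfl⟩
    refine ⟨v, hv, fun u hu => if_pos hu.2, fun u hu => ?_⟩
    by_cases hreach : Reach z r x v u
    · rw [compConf, if_pos hreach]; exact not_not.mp fun hxu => hu ⟨hxu, hreach⟩
    · rw [compConf, if_neg hreach]

lemma compConf_ne_iff {x : V3 → A} {v u : V3} :
    compConf z r x v u ≠ z ↔ Reach z r x v u ∧ x u ≠ z := by
  unfold compConf
  split_ifs with h <;> simp [h]

lemma compConf_of_reach {x : V3 → A} {v w : V3} (h : Reach z r x v w) :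
    compConf z r x w = compConf z r x v := by
  funext u
  have hiff : Reach z r x w u ↔ Reach z r x v u := ⟨h.trans, (reach_symm h).trans⟩
  classical
  exact if_congr hiff rfl rfl

lemma reach_compConf {x : V3 → A} {v u : V3} (h : Reach z r x v u) (hu : x u ≠ z) :
    Reach z r (compConf z r x v) v u := by
  induction h with
  | refl => exact ReflTransGen.refl
  | @tail b c hvb hbc ih =>
    have hb : compConf z r x v b ≠ z := compConf_ne_iff.mpr ⟨hvb, hbc.1⟩
    have hc : compConf z r x v c ≠ z := compConf_ne_iff.mpr ⟨hvb.tail hbc, hu⟩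
    exact (ih hbc.1).tail ⟨hb, hc, hbc.2.2⟩

lemma compConf_compConf (x : V3 → A) (v : V3) :
    compConf z r (compConf z r x v) v = compConf z r x v := by
  funext u
  by_cases hu : Reach z r (compConf z r x v) v u
  · rw [compConf, if_pos hu]
  · rw [compConf, if_neg hu]
    by_contra hne
    have ⟨hreach, hxu⟩ := compConf_ne_iff.mp (Ne.symm hne)
    exact hu (reach_compConf hreach hxu)

lemma IsCompConf.self {x y : V3 → A} (h : IsCompConf z r x y) : IsCompConf z r y y := by
  obtain ⟨v, hv, rfl⟩ := isCompConf_iff.mp h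
  exact isCompConf_iff.mpr
    ⟨v, compConf_ne_iff.mpr ⟨ReflTransGen.refl, hv⟩, (compConf_compConf x v).symm⟩

lemma IsCompConf.eq {x y y' : V3 → A} (h : IsCompConf z r x y) (h' : IsCompConf z r y y') :
    y' = y := by
  obtain ⟨v, -, rfl⟩ := isCompConf_iff.mp h
  obtain ⟨w, hw, rfl⟩ := isCompConf_iff.mp h'
  have ⟨hvw, hxw⟩ := compConf_ne_iff.mp hw
  rw [compConf_of_reach (reach_compConf hvw hxw), compConf_compConf]

lemma shift_shift (v w : V3) (x : V3 → A) : shift v (shift w x) = shift (v + w) x := by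
  funext u
  simp only [shift, sub_sub]

lemma shift_zero (x : V3 → A) : shift 0 x = x := by
  funext u
  simp only [shift, sub_zero]

lemma shift_neg_shift (v : V3) (x : V3 → A) : shift (-v) (shift v x) = x := by
  rw [shift_shift, neg_add_cancel, shift_zero]

lemma Reach.shift {x : V3 → A} {a b : V3} (v : V3) (h : Reach z r x a b) :
    Reach z r (shift v x) (a + v) (b + v) := by
  refine ReflTransGen.lift (· + v) (fun p q hpq => ?_) a b h
  simp only [Function.onFun, _root_.shift, add_sub_cancel_right]
  exact ⟨hpq.1, hpq.2.1, by simpa [dinf] using hpq.2.2⟩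

lemma reach_shift_iff {x : V3 → A} {a b : V3} (v : V3) :
    Reach z r (shift v x) (a + v) (b + v) ↔ Reach z r x a b := by
  refine ⟨fun h => ?_, Reach.shift v⟩
  simpa [shift_neg_shift] using h.shift (-v)

lemma compConf_shift (x : V3 → A) (v w : V3) :
    compConf z r (shift v x) (w + v) = shift v (compConf z r x w) := by
  funext u
  have hiff := reach_shift_iff (z := z) (r := r) (x := x) (a := w) (b := u - v) v
  rw [sub_add_cancel] at hiff
  classical
  exact if_congr hiff rfl rfl

lemma IsCompConf.shift {x y : V3 → A} (v : V3) (h : IsCompConf z r x y) :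
    IsCompConf z r (shift v x) (shift v y) := by
  obtain ⟨w, hw, rfl⟩ := isCompConf_iff.mp h
  refine isCompConf_iff.mpr ⟨w + v, ?_, (compConf_shift x v w).symm⟩
  simpa [_root_.shift] using hw

def compConfClosure (z : A) (r : ℕ) (X : Set (V3 → A)) : Set (V3 → A) :=
  {x | ∀ y, IsCompConf z r x y → ∃ x' ∈ X, IsCompConf z r x' y}

lemma subset_compConfClosure (X : Set (V3 → A)) : X ⊆ compConfClosure z r X :=
  fun x hx _ hy => ⟨x, hx, hy⟩

lemma compConfClosure_subset {X Y : Set (V3 → A)} (hY : IsZeroGluing z r Y) (hXY : X ⊆ Y) :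
    compConfClosure z r X ⊆ Y := by
  refine fun x hx => (hY x).mpr fun y hy => ?_
  obtain ⟨x', hx'X, hx'y⟩ := hx y hy
  exact (hY x').mp (hXY hx'X) y hx'y

lemma isZeroGluing_compConfClosure (X : Set (V3 → A)) :
    IsZeroGluing z r (compConfClosure z r X) := by
  refine fun x => ⟨fun hx y hy y' hy' => ?_, fun h y hy => h y hy y hy.self⟩
  rw [hy.eq hy']
  exact hx y hy

lemma shift_mem_compConfClosure {X : Set (V3 → A)} (hX : ∀ v, ∀ x ∈ X, shift v x ∈ X)
    (v : V3) {x : V3 → A} (hx : x ∈ compConfClosure z r X) :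
    shift v x ∈ compConfClosure z r X := by
  intro y hy
  obtain ⟨x', hx'X, hx'y⟩ := hx _ (by simpa only [shift_neg_shift] using hy.shift (-v))
  refine ⟨shift v x', hX v x' hx'X, ?_⟩
  simpa only [shift_shift, add_neg_cancel, shift_zero] using hx'y.shift v

lemma exists_finite_reach_of_eqOn {x : V3 → A} {a b : V3} (h : Reach z r x a b) :
    ∃ P : Set V3, P.Finite ∧ ∀ w, EqOn w x P → Reach z r w a b := by
  induction h with
  | refl => exact ⟨∅, finite_empty, fun _ _ => ReflTransGen.refl⟩
  | @tail b c _ hbc ih =>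
    obtain ⟨P, hP, hPw⟩ := ih
    refine ⟨insert b (insert c P), (hP.insert c).insert b, fun w hw => ?_⟩
    have hwP : EqOn w x P := hw.mono ((subset_insert c P).trans (subset_insert b _))
    refine (hPw w hwP).tail ⟨?_, ?_, hbc.2.2⟩
    · rw [hw (mem_insert b _)]; exact hbc.1
    · rw [hw (mem_insert_of_mem b (mem_insert c P))]; exact hbc.2.1

lemma exists_finite_compConf_eq (x : V3 → A) (v : V3) {S : Set V3} (hS : S.Finite) :
    ∃ G : Set V3, G.Finite ∧ S ⊆ G ∧ ∀ w, EqOn w x G →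
      ∀ s ∈ S, compConf z r x v s ≠ z → compConf z r w v s = compConf z r x v s := by
  have hP : ∀ s, ∃ P : Set V3, P.Finite ∧
      (Reach z r x v s → ∀ w, EqOn w x P → Reach z r w v s) := by
    intro s
    by_cases hs : Reach z r x v s
    · obtain ⟨P, hP, hPw⟩ := exists_finite_reach_of_eqOn hs
      exact ⟨P, hP, fun _ => hPw⟩
    · exact ⟨∅, finite_empty, fun h => absurd h hs⟩
  choose P hPfin hPreach using hP
  refine ⟨⋃ s ∈ S, insert s (P s), hS.biUnion fun s _ => (hPfin s).insert s,
    fun s hs => mem_biUnion hs (mem_insert s _), fun w hw s hs hxs => ?_⟩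
  have hwP : EqOn w x (insert s (P s)) :=
    hw.mono (subset_biUnion_of_mem (u := fun s => insert s (P s)) hs)
  have hreach := (compConf_ne_iff.mp hxs).1
  rw [compConf, compConf, if_pos (hPreach s hreach w (hwP.mono (subset_insert _ _))),
    if_pos hreach, hwP (mem_insert s _)]

/-- `IsCompConf z r x y` tested at the cell `u`, as seen from the cell `p`. -/
def LocallyCompConf (z : A) (r : ℕ) (y x : V3 → A) (p u : V3) : Prop :=
  (y u ≠ z → x u = y u) ∧ (y p ≠ z → y u = z → dinf p u ≤ r → x u = z)

lemma IsCompConf.locallyCompConf {x y : V3 → A} (h : IsCompConf z r x y) (p u : V3) :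
    LocallyCompConf z r y x p u := by
  obtain ⟨v, -, rfl⟩ := isCompConf_iff.mp h
  refine ⟨fun hu => ?_, fun hp hu hpu => ?_⟩
  · rw [compConf, if_pos (compConf_ne_iff.mp hu).1]
  · by_contra hxu
    obtain ⟨hvp, hxp⟩ := compConf_ne_iff.mp hp
    exact compConf_ne_iff.mpr ⟨hvp.tail ⟨hxp, hxu, hpu⟩, hxu⟩ hu

lemma isCompConf_of_forall_locallyCompConf {x y : V3 → A} (hy : IsCompConf z r y y)
    (h : ∀ p u, LocallyCompConf z r y x p u) : IsCompConf z r x y := by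
  obtain ⟨v, hv, hyv⟩ := isCompConf_iff.mp hy
  have hsupp : ∀ u, Reach z r x v u → y u ≠ z := by
    intro u hu
    induction hu with
    | refl => exact hv
    | @tail b c _ hbc ih => exact fun hyc => hbc.2.1 ((h b c).2 ih hyc hbc.2.2)
  have hx : ∀ u, y u ≠ z → x u ≠ z := fun u hu => by rw [(h u u).1 hu]; exact hu
  have hreach : ∀ u, Reach z r y v u → Reach z r x v u := fun u hu =>
    ReflTransGen.mono (fun p q hpq => ⟨hx p hpq.1, hx q hpq.2.1, hpq.2.2⟩) _ _ hu
  refine isCompConf_iff.mpr ⟨v, hx v hv, funext fun u => ?_⟩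
  by_cases hu : Reach z r x v u
  · rw [compConf, if_pos hu, (h u u).1 (hsupp u hu)]
  · rw [compConf, if_neg hu, hyv, compConf, if_neg fun h' => hu (hreach u h')]

section Topology

variable [TopologicalSpace A] [DiscreteTopology A]

lemma isClosed_setOf_locallyCompConf (y : V3 → A) (p u : V3) :
    IsClosed {x : V3 → A | LocallyCompConf z r y x p u} :=
  show IsClosed ((fun x : V3 → A => x u) ⁻¹'
      {a | (y u ≠ z → a = y u) ∧ (y p ≠ z → y u = z → dinf p u ≤ r → a = z)}) from
    (isClosed_discrete _).preimage (continuous_apply u)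

lemma exists_eqOn_of_mem_closure {ι : Type*} {s : Set (ι → A)} {x : ι → A}
    (hx : x ∈ closure s) {G : Set ι} (hG : G.Finite) : ∃ w ∈ s, EqOn w x G := by
  obtain ⟨w, hwG, hws⟩ := mem_closure_iff.mp hx (G.pi fun u => {x u})
    (isOpen_set_pi hG fun u _ => isOpen_discrete _) fun u _ => rfl
  exact ⟨w, hws, hwG⟩

lemma exists_mem_forall_locallyCompConf {X : Set (V3 → A)} {x : V3 → A}
    (hx : x ∈ closure (compConfClosure z r X)) {v : V3} (hv : x v ≠ z)
    (F : Finset (V3 × V3)) :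
    ∃ x' ∈ X, ∀ q ∈ F, LocallyCompConf z r (compConf z r x v) x' q.1 q.2 := by
  set y := compConf z r x v
  set S : Finset V3 := F.image Prod.fst ∪ F.image Prod.snd
  obtain ⟨G, hG, hSG, hGw⟩ := exists_finite_compConf_eq (z := z) (r := r) x v S.finite_toSet
  obtain ⟨w, hwC, hwx⟩ := exists_eqOn_of_mem_closure hx (hG.insert v)
  have hwv : w v ≠ z := by rw [hwx (mem_insert v G)]; exact hv
  obtain ⟨x', hx'X, hx'⟩ := hwC _ (isCompConf_iff.mpr ⟨v, hwv, rfl⟩)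
  have hyw : ∀ s ∈ S, y s ≠ z → compConf z r w v s = y s :=
    fun s hs => hGw w (hwx.mono (subset_insert v G)) s hs
  refine ⟨x', hx'X, fun q hq => ?_⟩
  have hp : q.1 ∈ S := Finset.mem_union_left _ (Finset.mem_image_of_mem _ hq)
  have hu : q.2 ∈ S := Finset.mem_union_right _ (Finset.mem_image_of_mem _ hq)
  have hloc := hx'.locallyCompConf q.1 q.2
  refine ⟨fun hyu => ?_, fun hyp hyu hpu => hloc.2 ?_ ?_ hpu⟩
  · rw [← hyw _ hu hyu]
    exact hloc.1 (by rw [hyw _ hu hyu]; exact hyu)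
  · rw [hyw _ hp hyp]; exact hyp
  · have hxu : x q.2 = z :=
      ((isCompConf_iff.mpr ⟨v, hv, rfl⟩).locallyCompConf q.1 q.2).2 hyp hyu hpu
    by_contra hne
    exact (compConf_ne_iff.mp hne).2 (by rw [hwx (mem_insert_of_mem v (hSG hu))]; exact hxu)

lemma isClosed_compConfClosure [Finite A] {X : Set (V3 → A)} (hX : IsClosed X) :
    IsClosed (compConfClosure z r X) := by
  refine closure_subset_iff_isClosed.mp fun x hx y hy => ?_
  obtain ⟨v, hv, rfl⟩ := isCompConf_iff.mp hy
  have hfin : ∀ F : Finset (V3 × V3),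
      (X ∩ ⋂ q ∈ F, {x' | LocallyCompConf z r (compConf z r x v) x' q.1 q.2}).Nonempty := by
    intro F
    obtain ⟨x', hx'X, hx'⟩ := exists_mem_forall_locallyCompConf hx hv F
    exact ⟨x', hx'X, mem_iInter₂.mpr hx'⟩
  obtain ⟨x', hx'X, hx'⟩ := hX.isCompact.inter_iInter_nonempty
    (fun q : V3 × V3 => {x' | LocallyCompConf z r (compConf z r x v) x' q.1 q.2})
    (fun q => isClosed_setOf_locallyCompConf _ q.1 q.2) hfin
  exact ⟨x', hx'X, isCompConf_of_forall_locallyCompConf hy.self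
    fun p u => mem_iInter.mp hx' (p, u)⟩

end Topology

end ComponentConfiguration

lemma isSubshift_compConfClosure {A : Type} [Finite A] (z : A) (r : ℕ) {X : Set (V3 → A)}
    (hX : IsSubshift X) : IsSubshift (compConfClosure z r X) := by
  let _ : TopologicalSpace A := ⊥
  have _ : DiscreteTopology A := ⟨rfl⟩
  exact ⟨isClosed_compConfClosure hX.1, fun v _ hx => shift_mem_compConfClosure hX.2 v hx⟩

/-- The `r`-zero-gluing closure of a subshift `X ⊆ A^{ℤ³}` equals the set of
configurations all of whose `r`-connected component configurations are
`r`-connected component configurations of elements of `X`. -/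
theorem statement16 {A : Type} [Fintype A] (z : A) (r : ℕ)
    (X : Set (V3 → A)) (hX : IsSubshift X) :
    ZGC z r X =
      {x : V3 → A | ∀ y : V3 → A, IsCompConf z r x y →
        ∃ x' ∈ X, IsCompConf z r x' y} :=
  Subset.antisymm
    (sInter_subset_of_mem ⟨isSubshift_compConfClosure z r hX,
      isZeroGluing_compConfClosure X, subset_compConfClosure X⟩)
    (subset_sInter fun _ hY => compConfClosure_subset hY.2.1 hY.2.2)
end
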